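/- For maps on a fixed complex matrix algebra M_A, the following seven statements are equivalent: (1) PPT∘PPT ⊆ SP_1; (2) PPT∘P_1 ⊆ DEC; (3) P_1∘PPT ⊆ DEC; (4) PPT∘CP∘PPT ⊆ SP_1; (5) PPT∘DEC∘PPT ⊆ SP_1; (6) PPT∘P_1∘PPT ⊆ CP; (7) PPT∘P_1∘PPT ⊆ PPT. -/

import Mathlib

open Matrix Finset
open scoped ComplexOrder Kronecker

/-- The algebra of `n × n` complex matrices. -/
abbrev Mat (n : ℕ) := Matrix (Fin n) (Fin n) ℂ

/-- Linear maps between matrix algebras. -/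
abbrev MMap (m n : ℕ) := Mat m →ₗ[ℂ] Mat n

/-- The bilinear pairing `⟨a,b⟩ = Tr(aᵀ b)`. -/
noncomputable def mpair {ι : Type*} [Fintype ι] (x y : Matrix ι ι ℂ) : ℂ :=
  (xᵀ * y).trace

/-- The Choi matrix `C_φ = Σ_{i,j} e_{ij} ⊗ φ(e_{ij})`. -/
noncomputable def choi {m n : ℕ} (φ : MMap m n) :
    Matrix (Fin m × Fin n) (Fin m × Fin n) ℂ :=
  Matrix.of fun p q => φ (Matrix.single p.1 q.1 1) p.2 q.2

/-- The pairing on maps `⟨φ,ψ⟩ = ⟨C_φ, C_ψ⟩`. -/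
noncomputable def mapPair {m n : ℕ} (φ ψ : MMap m n) : ℂ := mpair (choi φ) (choi ψ)

/-- The adjoint `φ*` with respect to the pairing `⟨a,b⟩ = Tr(aᵀ b)`:
it satisfies `⟨φ(a),b⟩ = ⟨a,φ*(b)⟩`. -/
noncomputable def adjMap {m n : ℕ} (φ : MMap m n) : MMap n m where
  toFun y := Matrix.of fun i j => mpair (φ (Matrix.single i j 1)) y
  map_add' y z := by
    ext i j
    simp [mpair, Matrix.mul_add]
  map_smul' c y := by
    ext i j
    simp [mpair, Matrix.mul_smul]

/-- Hermitian-preserving maps: `φ(a*) = φ(a)*`. -/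
def IsHermP {m n : ℕ} (φ : MMap m n) : Prop := ∀ x : Mat m, φ xᴴ = (φ x)ᴴ

/-- The real vector space `H(M_A,M_B)` of Hermitian-preserving maps, as a set. -/
def HermSet (m n : ℕ) : Set (MMap m n) := {φ | IsHermP φ}

/-- Positive maps: mapping positive semidefinite matrices to positive semidefinite ones. -/
def IsPosMap {m n : ℕ} (φ : MMap m n) : Prop :=
  ∀ x : Mat m, x.PosSemidef → (φ x).PosSemidef

/-- Completely positive maps: those whose Choi matrix is positive semidefinite. -/
def IsCP {m n : ℕ} (φ : MMap m n) : Prop := (choi φ).PosSemidef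

/-- The cone `CP` of completely positive maps. -/
def CPset (m n : ℕ) : Set (MMap m n) := {φ | IsCP φ}

/-- `K₁ ∘ K₀ = {φ₁ ∘ φ₀ : φ₁ ∈ K₁, φ₀ ∈ K₀}`. -/
def compSet {m n p : ℕ} (K1 : Set (MMap n p)) (K0 : Set (MMap m n)) : Set (MMap m p) :=
  {χ | ∃ φ₁ ∈ K1, ∃ φ₀ ∈ K0, χ = φ₁ ∘ₗ φ₀}

/-- `K₂ ∘ K₁ ∘ K₀ = {φ₂ ∘ φ₁ ∘ φ₀ : φᵢ ∈ Kᵢ}`. -/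
def comp3 {m n p q : ℕ} (K2 : Set (MMap p q)) (K1 : Set (MMap n p)) (K0 : Set (MMap m n)) :
    Set (MMap m q) :=
  {χ | ∃ φ₂ ∈ K2, ∃ φ₁ ∈ K1, ∃ φ₀ ∈ K0, χ = φ₂ ∘ₗ φ₁ ∘ₗ φ₀}

/-- The dual cone `K° = {ψ ∈ H(M_A,M_B) : ⟨φ,ψ⟩ ≥ 0 for all φ ∈ K}`. -/
def dualCone {m n : ℕ} (K : Set (MMap m n)) : Set (MMap m n) :=
  {ψ | IsHermP ψ ∧ ∀ φ ∈ K, 0 ≤ mapPair φ ψ}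

/-- `K* = {φ* : φ ∈ K}`. -/
noncomputable def starSet {m n : ℕ} (K : Set (MMap m n)) : Set (MMap n m) := adjMap '' K

/-- `K^⊳ = (K ∘ CP_A)°`. -/
def rdualSet {m n : ℕ} (K : Set (MMap m n)) : Set (MMap m n) :=
  dualCone (compSet K (CPset m m))

/-- `K^⊲ = (CP_B ∘ K)°`. -/
def ldualSet {m n : ℕ} (K : Set (MMap m n)) : Set (MMap m n) :=
  dualCone (compSet (CPset n n) K)

/-- A convex cone of maps: closed under addition and nonnegative real scaling. -/
def IsConeSet {m n : ℕ} (K : Set (MMap m n)) : Prop :=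
  (∀ φ ∈ K, ∀ ψ ∈ K, φ + ψ ∈ K) ∧ (∀ φ ∈ K, ∀ r : ℝ, 0 ≤ r → (r : ℂ) • φ ∈ K)

/-- A closed convex cone of maps (closedness via the Choi isomorphism). -/
def IsClosedConeSet {m n : ℕ} (K : Set (MMap m n)) : Prop :=
  IsConeSet K ∧ IsClosed (choi '' K)

/-- Ampliation `1_Z ⊗ σ : M_Z ⊗ M_X → M_Z ⊗ M_Y`. -/
def idTensor {z x y : ℕ} (σ : MMap x y)
    (M : Matrix (Fin z × Fin x) (Fin z × Fin x) ℂ) :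
    Matrix (Fin z × Fin y) (Fin z × Fin y) ℂ :=
  Matrix.of fun p q => σ (Matrix.of fun k l => M (p.1, k) (q.1, l)) p.2 q.2

/-- Ampliation `σ ⊗ 1_Z : M_X ⊗ M_Z → M_Y ⊗ M_Z`. -/
def tensorId {x y z : ℕ} (σ : MMap x y)
    (M : Matrix (Fin x × Fin z) (Fin x × Fin z) ℂ) :
    Matrix (Fin y × Fin z) (Fin y × Fin z) ℂ :=
  Matrix.of fun p q => σ (Matrix.of fun i j => M (i, p.2) (j, q.2)) p.1 q.1

/-- `S_1`: the closed convex cone generated by `x ⊗ y` with `x, y` positive semidefinite. -/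
def SepCone (m n : ℕ) : Set (Matrix (Fin m × Fin n) (Fin m × Fin n) ℂ) :=
  closure {X | ∃ (r : ℕ) (x : Fin r → Mat m) (y : Fin r → Mat n),
    (∀ i, (x i).PosSemidef ∧ (y i).PosSemidef) ∧ X = ∑ i, x i ⊗ₖ y i}

/-- `SP_1`: Hermitian-preserving maps with separable Choi matrix. -/
def SP1set (m n : ℕ) : Set (MMap m n) := {φ | IsHermP φ ∧ choi φ ∈ SepCone m n}


/-- Vectors of Schmidt rank at most `k`. -/
def SchmidtRankLE (k : ℕ) {m n : ℕ} (ξ : Fin m × Fin n → ℂ) : Prop :=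
  ∃ (u : Fin k → Fin m → ℂ) (v : Fin k → Fin n → ℂ),
    ξ = fun p => ∑ i, u i p.1 * v i p.2

/-- `k`-blockpositive matrices: `⟨Y, |ξ⟩⟨ξ|⟩ ≥ 0` for every `ξ` of Schmidt rank at most `k`. -/
def BlockPos (k : ℕ) {m n : ℕ} (Y : Matrix (Fin m × Fin n) (Fin m × Fin n) ℂ) : Prop :=
  ∀ ξ : Fin m × Fin n → ℂ, SchmidtRankLE k ξ →
    0 ≤ mpair Y (Matrix.of fun p q => ξ p * star (ξ q))

/-- `S_k`: the closed convex cone generated by `|ξ⟩⟨ξ|` for `ξ` of Schmidt rank at most `k`. -/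
def SchmidtCone (k m n : ℕ) : Set (Matrix (Fin m × Fin n) (Fin m × Fin n) ℂ) :=
  closure {X | ∃ (r : ℕ) (ξ : Fin r → Fin m × Fin n → ℂ),
    (∀ i, SchmidtRankLE k (ξ i)) ∧
    X = ∑ i, Matrix.of fun p q => ξ i p * star (ξ i q)}

/-- `k`-positive maps: the ampliation `1_{M_k} ⊗ φ` is a positive map. -/
def IsKPos (k : ℕ) {m n : ℕ} (φ : MMap m n) : Prop :=
  ∀ X : Matrix (Fin k × Fin m) (Fin k × Fin m) ℂ, X.PosSemidef → (idTensor φ X).PosSemidef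

/-- The transpose map as a linear map. -/
def tmap (m : ℕ) : MMap m m where
  toFun x := xᵀ
  map_add' x y := by simp [Matrix.transpose_add]
  map_smul' c x := by simp [Matrix.transpose_smul]

/-- Completely copositive maps: `CCP = {φ ∘ t : φ ∈ CP}`. -/
def CCPset (m : ℕ) : Set (MMap m m) := {χ | ∃ φ, IsCP φ ∧ χ = φ ∘ₗ tmap m}

/-- PPT maps: `PPT = CP ∩ CCP`. -/
def PPTset (m : ℕ) : Set (MMap m m) := CPset m m ∩ CCPset m

/-- Decomposable maps: the convex hull of `CP` and `CCP`. -/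
noncomputable def DECset (m : ℕ) : Set (MMap m m) := convexHull ℝ (CPset m m ∪ CCPset m)

/-- The cone `P_1` of positive maps. -/
def P1set (m n : ℕ) : Set (MMap m n) := {φ | IsPosMap φ}

/-- A right-mapping cone: a closed convex cone of positive (Hermitian-preserving) maps `L`
with `L ∘ CP_A ⊆ L`. -/
def IsRMC {m n : ℕ} (L : Set (MMap m n)) : Prop :=
  L ⊆ HermSet m n ∧ (∀ φ ∈ L, IsPosMap φ) ∧ IsClosedConeSet L ∧
    compSet L (CPset m m) ⊆ L

/-- A left-mapping cone: a closed convex cone of positive (Hermitian-preserving) maps `L`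
with `CP_B ∘ L ⊆ L`. -/
def IsLMC {m n : ℕ} (L : Set (MMap m n)) : Prop :=
  L ⊆ HermSet m n ∧ (∀ φ ∈ L, IsPosMap φ) ∧ IsClosedConeSet L ∧
    compSet (CPset n n) L ⊆ L


/-! ### Auxiliary development -/

namespace StmtAux

open Matrix

section MatrixLevel

variable {ι : Type*} [Fintype ι] [DecidableEq ι]

lemma mpair_eq_sum (x y : Matrix ι ι ℂ) : mpair x y = ∑ P, ∑ Q, x P Q * y P Q := by
  simp only [mpair, Matrix.trace, Matrix.diag, Matrix.mul_apply, Matrix.transpose_apply]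
  exact Finset.sum_comm

lemma mpair_comm (x y : Matrix ι ι ℂ) : mpair x y = mpair y x := by
  simp only [mpair_eq_sum]
  exact Finset.sum_congr rfl fun P _ => Finset.sum_congr rfl fun Q _ => mul_comm _ _

lemma mpair_add_left (x y z : Matrix ι ι ℂ) : mpair (x + y) z = mpair x z + mpair y z := by
  simp [mpair_eq_sum, Matrix.add_apply, add_mul, Finset.sum_add_distrib]

lemma mpair_sum_left {κ : Type*} (s : Finset κ) (f : κ → Matrix ι ι ℂ) (z : Matrix ι ι ℂ) :
    mpair (∑ i ∈ s, f i) z = ∑ i ∈ s, mpair (f i) z := by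
  classical
  induction s using Finset.induction_on with
  | empty => simp [mpair_eq_sum]
  | insert _ _ h ih => rw [Finset.sum_insert h, mpair_add_left, ih, Finset.sum_insert h]

lemma mpair_real_smul (r : ℝ) (x y : Matrix ι ι ℂ) : mpair (r • x) y = r • mpair x y := by
  simp [mpair_eq_sum, Matrix.smul_apply, Finset.smul_sum, smul_mul_assoc, mul_assoc]

lemma dot_eq_sum (v : ι → ℂ) (A : Matrix ι ι ℂ) :
    star v ⬝ᵥ A *ᵥ v = ∑ P, ∑ Q, star (v P) * A P Q * v Q := by
  simp [dotProduct, Matrix.mulVec, Finset.mul_sum, mul_assoc]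

/-- The rank-one matrix `|v̄⟩⟨v̄|`. -/
noncomputable def outer (v : ι → ℂ) : Matrix ι ι ℂ :=
  Matrix.of fun P Q => star (v P) * v Q

lemma outer_apply (v : ι → ℂ) (P Q : ι) : outer v P Q = star (v P) * v Q := rfl

lemma outer_posSemidef (v : ι → ℂ) : (outer v).PosSemidef := by
  refine Matrix.PosSemidef.of_dotProduct_mulVec_nonneg ?_ ?_
  · ext P Q
    simp [outer, Matrix.conjTranspose_apply, mul_comm]
  · intro w
    have h : star w ⬝ᵥ (outer v) *ᵥ w
        = star (∑ P, v P * w P) * ∑ Q, v Q * w Q := by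
      rw [dot_eq_sum, star_sum, Finset.sum_mul]
      refine Finset.sum_congr rfl fun P _ => ?_
      rw [Finset.mul_sum]
      refine Finset.sum_congr rfl fun Q _ => ?_
      simp only [outer, Matrix.of_apply, star_mul']
      ring
    rw [h]
    exact star_mul_self_nonneg _

lemma mpair_outer_left (v : ι → ℂ) (c : Matrix ι ι ℂ) :
    mpair (outer v) c = star v ⬝ᵥ c *ᵥ v := by
  rw [mpair_eq_sum, dot_eq_sum]
  refine Finset.sum_congr rfl fun P _ => Finset.sum_congr rfl fun Q _ => ?_
  simp only [outer, Matrix.of_apply]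
  ring

lemma psd_eq_conjT_mul_self {A : Matrix ι ι ℂ} (hA : A.PosSemidef) :
    ∃ B : Matrix ι ι ℂ, A = Bᴴ * B := by
  open scoped MatrixOrder in
  exact CStarAlgebra.nonneg_iff_eq_star_mul_self.mp hA.nonneg

lemma mpair_nonneg {x y : Matrix ι ι ℂ} (hx : x.PosSemidef) (hy : y.PosSemidef) :
    0 ≤ mpair x y := by
  obtain ⟨B, rfl⟩ := psd_eq_conjT_mul_self hy
  have h : mpair x (Bᴴ * B) = ∑ r, star (fun P => B r P) ⬝ᵥ x *ᵥ fun Q => B r Q := by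
    simp only [mpair_eq_sum, dot_eq_sum, Pi.star_apply]
    calc ∑ P, ∑ Q, x P Q * (Bᴴ * B) P Q
        = ∑ P, ∑ Q, ∑ r, star (B r P) * x P Q * B r Q := by
          refine Finset.sum_congr rfl fun P _ => Finset.sum_congr rfl fun Q _ => ?_
          rw [Matrix.mul_apply, Finset.mul_sum]
          refine Finset.sum_congr rfl fun r _ => ?_
          simp only [Matrix.conjTranspose_apply]
          ring
      _ = ∑ r, ∑ P, ∑ Q, star (B r P) * x P Q * B r Q := by
          rw [show (∑ P, ∑ Q, ∑ r, star (B r P) * x P Q * B r Q)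
              = ∑ P, ∑ r, ∑ Q, star (B r P) * x P Q * B r Q from
            Finset.sum_congr rfl fun P _ => Finset.sum_comm]
          exact Finset.sum_comm
  rw [h]
  exact Finset.sum_nonneg fun r _ => hx.dotProduct_mulVec_nonneg _

lemma psd_of_mpair {c : Matrix ι ι ℂ} (hh : c.IsHermitian)
    (h : ∀ x : Matrix ι ι ℂ, x.PosSemidef → 0 ≤ mpair x c) : c.PosSemidef :=
  .of_dotProduct_mulVec_nonneg hh fun v => by
    have := h (outer v) (outer_posSemidef v)
    rwa [mpair_outer_left] at this

lemma psd_real_smul {A : Matrix ι ι ℂ} (hA : A.PosSemidef) {r : ℝ} (hr : 0 ≤ r) :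
    (r • A).PosSemidef := by
  have h : r • A = (r : ℂ) • A := by
    ext P Q
    simp [Matrix.smul_apply, Complex.real_smul]
  rw [h]
  refine Matrix.PosSemidef.of_dotProduct_mulVec_nonneg ?_ ?_
  · show ((r:ℂ) • A)ᴴ = (r:ℂ) • A
    rw [Matrix.conjTranspose_smul, hA.1]
    norm_num
  · intro v
    have h2 : star v ⬝ᵥ ((r : ℂ) • A) *ᵥ v = (r : ℂ) * (star v ⬝ᵥ A *ᵥ v) := by
      simp [dot_eq_sum, Finset.mul_sum]
      refine Finset.sum_congr rfl fun P _ => Finset.sum_congr rfl fun Q _ => ?_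
      ring
    rw [h2]
    exact mul_nonneg (by exact_mod_cast Complex.zero_le_real.mpr hr) (hA.dotProduct_mulVec_nonneg v)

lemma psd_sum {κ : Type*} (s : Finset κ) (f : κ → Matrix ι ι ℂ)
    (h : ∀ i ∈ s, (f i).PosSemidef) : (∑ i ∈ s, f i).PosSemidef := by
  classical
  induction s using Finset.induction_on with
  | empty => simpa using Matrix.PosSemidef.zero
  | insert a s ha ih =>
      rw [Finset.sum_insert ha]
      exact (h a (Finset.mem_insert_self a s)).add
        (ih fun i hi => h i (Finset.mem_insert_of_mem hi))

/-! Topology -/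

lemma continuous_entry (P Q : ι) : Continuous fun A : Matrix ι ι ℂ => A P Q :=
  (continuous_apply Q).comp (continuous_apply P)

lemma continuous_mpair_left (c : Matrix ι ι ℂ) :
    Continuous fun A : Matrix ι ι ℂ => mpair A c := by
  have h : (fun A : Matrix ι ι ℂ => mpair A c) = fun A => ∑ P, ∑ Q, A P Q * c P Q := by
    funext A; exact mpair_eq_sum A c
  rw [h]
  exact continuous_finset_sum _ fun P _ =>
    continuous_finset_sum _ fun Q _ => (continuous_entry P Q).mul continuous_const

lemma isClosed_nonneg_complex : IsClosed {z : ℂ | 0 ≤ z} := by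
  have h : {z : ℂ | 0 ≤ z} = Complex.re ⁻¹' Set.Ici 0 ∩ Complex.im ⁻¹' {0} := by
    ext z
    simp [Complex.le_def, eq_comm]
  rw [h]
  exact (isClosed_Ici.preimage Complex.continuous_re).inter
    (isClosed_singleton.preimage Complex.continuous_im)

lemma continuous_quad (v : ι → ℂ) : Continuous fun A : Matrix ι ι ℂ => star v ⬝ᵥ A *ᵥ v := by
  have h : (fun A : Matrix ι ι ℂ => star v ⬝ᵥ A *ᵥ v)
      = fun A => ∑ P, ∑ Q, star (v P) * A P Q * v Q := by
    funext A; exact dot_eq_sum v A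
  rw [h]
  exact continuous_finset_sum _ fun P _ => continuous_finset_sum _ fun Q _ =>
    ((continuous_const.mul (continuous_entry P Q)).mul continuous_const)

lemma continuous_conjT : Continuous fun A : Matrix ι ι ℂ => Aᴴ := by
  have h : (fun A : Matrix ι ι ℂ => Aᴴ) = fun A => Matrix.of fun P Q => star (A Q P) := by
    funext A; rfl
  rw [h]
  exact continuous_pi fun P => continuous_pi fun Q => (continuous_entry Q P).star

lemma isClosed_psd : IsClosed {A : Matrix ι ι ℂ | A.PosSemidef} := by
  have h : {A : Matrix ι ι ℂ | A.PosSemidef}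
      = {A : Matrix ι ι ℂ | Aᴴ = A} ∩ ⋂ v : ι → ℂ, {A | 0 ≤ star v ⬝ᵥ A *ᵥ v} := by
    ext A
    simp only [Set.mem_setOf_eq, Set.mem_inter_iff, Set.mem_iInter]
    exact Matrix.posSemidef_iff_dotProduct_mulVec
  rw [h]
  exact (isClosed_eq continuous_conjT continuous_id).inter
    (isClosed_iInter fun v => isClosed_nonneg_complex.preimage (continuous_quad v))

end MatrixLevel

section MapLevel

open Matrix

set_option linter.unusedSectionVars false

variable {m n : ℕ}

lemma sum_comm4 {α β γ δ M : Type*} [Fintype α] [Fintype β] [Fintype γ] [Fintype δ]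
    [AddCommMonoid M] (f : α → β → γ → δ → M) :
    ∑ a, ∑ b, ∑ c, ∑ d, f a b c d = ∑ c, ∑ d, ∑ a, ∑ b, f a b c d := by
  rw [show (∑ a, ∑ b, ∑ c, ∑ d, f a b c d) = ∑ a, ∑ c, ∑ b, ∑ d, f a b c d from
    Finset.sum_congr rfl fun a _ => Finset.sum_comm]
  rw [show (∑ a, ∑ c, ∑ b, ∑ d, f a b c d) = ∑ c, ∑ a, ∑ b, ∑ d, f a b c d from
    Finset.sum_comm]
  refine Finset.sum_congr rfl fun c _ => ?_
  rw [show (∑ a, ∑ b, ∑ d, f a b c d) = ∑ a, ∑ d, ∑ b, f a b c d from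
    Finset.sum_congr rfl fun a _ => Finset.sum_comm]
  exact Finset.sum_comm

lemma sum_swap13 {α β γ δ M : Type*} [Fintype α] [Fintype β] [Fintype γ] [Fintype δ]
    [AddCommMonoid M] (f : α → β → γ → δ → M) :
    ∑ a, ∑ b, ∑ c, ∑ d, f a b c d = ∑ c, ∑ b, ∑ a, ∑ d, f a b c d := by
  rw [show (∑ a, ∑ b, ∑ c, ∑ d, f a b c d) = ∑ a, ∑ c, ∑ b, ∑ d, f a b c d from
    Finset.sum_congr rfl fun a _ => Finset.sum_comm]
  rw [show (∑ a, ∑ c, ∑ b, ∑ d, f a b c d) = ∑ c, ∑ a, ∑ b, ∑ d, f a b c d from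
    Finset.sum_comm]
  refine Finset.sum_congr rfl fun c _ => Finset.sum_comm

lemma mmap_apply (φ : MMap m n) (x : Mat m) (p q : Fin n) :
    φ x p q = ∑ i, ∑ j, x i j * φ (Matrix.single i j 1) p q := by
  have hstd : ∀ i j, Matrix.single i j (x i j) = x i j • Matrix.single i j (1 : ℂ) := by
    intro i j; rw [Matrix.smul_single, smul_eq_mul, mul_one]
  conv_lhs => rw [Matrix.matrix_eq_sum_single x]
  simp only [map_sum, Matrix.sum_apply, hstd, LinearMap.map_smul, Matrix.smul_apply, smul_eq_mul]

/-- The inverse of the Choi correspondence. -/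
noncomputable def ofChoi (M : Matrix (Fin m × Fin n) (Fin m × Fin n) ℂ) : MMap m n where
  toFun x := Matrix.of fun p q => ∑ i, ∑ j, x i j * M (i, p) (j, q)
  map_add' x y := by
    ext p q
    simp [Matrix.add_apply, add_mul, Finset.sum_add_distrib]
  map_smul' c x := by
    ext p q
    simp [Matrix.smul_apply, smul_eq_mul, Finset.mul_sum, mul_assoc]

lemma ofChoi_apply (M : Matrix (Fin m × Fin n) (Fin m × Fin n) ℂ) (x : Mat m) (p q : Fin n) :
    ofChoi M x p q = ∑ i, ∑ j, x i j * M (i, p) (j, q) := rfl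

lemma choi_apply (φ : MMap m n) (i j : Fin m) (p q : Fin n) :
    choi φ (i, p) (j, q) = φ (Matrix.single i j 1) p q := rfl

lemma choi_ofChoi (M : Matrix (Fin m × Fin n) (Fin m × Fin n) ℂ) : choi (ofChoi M) = M := by
  ext ⟨i, p⟩ ⟨j, q⟩
  show ∑ i', ∑ j', Matrix.single i j (1:ℂ) i' j' * M (i', p) (j', q) = M (i, p) (j, q)
  simp [Matrix.single, ite_and, Matrix.of_apply, ite_mul, zero_mul, one_mul,
    Finset.sum_ite_eq, Finset.mem_univ]

lemma ofChoi_choi (φ : MMap m n) : ofChoi (choi φ) = φ := by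
  refine LinearMap.ext fun x => ?_
  ext p q
  rw [show (ofChoi (choi φ)) x p q = ∑ i, ∑ j, x i j * choi φ (i, p) (j, q) from rfl,
    mmap_apply φ x p q]
  rfl

lemma choi_inj {φ ψ : MMap m n} (h : choi φ = choi ψ) : φ = ψ := by
  have h2 := congrArg ofChoi h
  rwa [ofChoi_choi, ofChoi_choi] at h2

lemma choi_add (φ ψ : MMap m n) : choi (φ + ψ) = choi φ + choi ψ := by
  ext ⟨i, p⟩ ⟨j, q⟩
  rfl

lemma choi_real_smul (r : ℝ) (φ : MMap m n) : choi (r • φ) = r • choi φ := by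
  ext ⟨i, p⟩ ⟨j, q⟩
  rfl

lemma conjTranspose_stdBasisMatrix (i j : Fin m) :
    (Matrix.single i j (1:ℂ))ᴴ = Matrix.single j i (1:ℂ) := by
  ext k l
  simp only [Matrix.conjTranspose_apply, Matrix.single, Matrix.of_apply, apply_ite,
    star_one, star_zero]
  by_cases h1 : i = l <;> by_cases h2 : j = k <;> simp [h1, h2]

lemma transpose_stdBasisMatrix (i j : Fin m) :
    (Matrix.single i j (1:ℂ))ᵀ = Matrix.single j i (1:ℂ) := by
  ext k l
  simp only [Matrix.transpose_apply, Matrix.single, Matrix.of_apply]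
  by_cases h1 : i = l <;> by_cases h2 : j = k <;> simp [h1, h2]

lemma isHermP_iff_choi_isHermitian (φ : MMap m n) : IsHermP φ ↔ (choi φ).IsHermitian := by
  constructor
  · intro hφ
    ext ⟨i, p⟩ ⟨j, q⟩
    show star (choi φ (j, q) (i, p)) = choi φ (i, p) (j, q)
    rw [choi_apply, choi_apply]
    have h := hφ (Matrix.single j i 1)
    rw [conjTranspose_stdBasisMatrix] at h
    rw [h]
    rfl
  · intro hc
    have key : ∀ (i j : Fin m) (p q : Fin n),
        star (φ (Matrix.single i j 1) q p) = φ (Matrix.single j i 1) p q := by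
      intro i j p q
      have h1 : (choi φ)ᴴ (j, p) (i, q) = choi φ (j, p) (i, q) := by rw [hc.eq]
      simpa [Matrix.conjTranspose_apply, choi_apply] using h1
    intro x
    ext p q
    show φ xᴴ p q = star (φ x q p)
    rw [mmap_apply φ xᴴ p q, mmap_apply φ x q p]
    have hR : star (∑ i, ∑ j, x i j * φ (Matrix.single i j 1) q p)
        = ∑ i, ∑ j, star (x i j) * φ (Matrix.single j i 1) p q := by
      rw [star_sum]
      refine Finset.sum_congr rfl fun i _ => ?_
      rw [star_sum]
      refine Finset.sum_congr rfl fun j _ => ?_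
      rw [star_mul', key i j p q, mul_comm]
    rw [hR]
    have hL : ∀ i j, (xᴴ : Mat m) i j * φ (Matrix.single i j 1) p q
        = star (x j i) * φ (Matrix.single i j 1) p q := fun i j => rfl
    simp only [hL]
    exact Finset.sum_comm

lemma isHermP_comp {k m n : ℕ} {φ : MMap m n} {ψ : MMap k m} (hφ : IsHermP φ)
    (hψ : IsHermP ψ) : IsHermP (φ ∘ₗ ψ) := by
  intro x
  simp [LinearMap.comp_apply, hψ x, hφ (ψ x)]

lemma mapPair_eq (φ ψ : MMap m n) :
    mapPair φ ψ = ∑ i, ∑ j, mpair (φ (Matrix.single i j 1)) (ψ (Matrix.single i j 1)) := by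
  rw [mapPair, mpair_eq_sum]
  calc (∑ P : Fin m × Fin n, ∑ Q : Fin m × Fin n, choi φ P Q * choi ψ P Q)
      = ∑ i, ∑ p, ∑ j, ∑ q,
          φ (Matrix.single i j 1) p q * ψ (Matrix.single i j 1) p q := by
        rw [Fintype.sum_prod_type]
        refine Finset.sum_congr rfl fun i _ => Finset.sum_congr rfl fun p _ => ?_
        rw [Fintype.sum_prod_type]
        simp only [choi_apply]
    _ = ∑ i, ∑ j, ∑ p, ∑ q,
          φ (Matrix.single i j 1) p q * ψ (Matrix.single i j 1) p q :=
        Finset.sum_congr rfl fun i _ => Finset.sum_comm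
    _ = ∑ i, ∑ j, mpair (φ (Matrix.single i j 1)) (ψ (Matrix.single i j 1)) := by
        refine Finset.sum_congr rfl fun i _ => Finset.sum_congr rfl fun j _ => ?_
        rw [mpair_eq_sum]

lemma mapPair_comm (φ ψ : MMap m n) : mapPair φ ψ = mapPair ψ φ := mpair_comm _ _

lemma adjMap_apply (φ : MMap m n) (y : Mat n) (i j : Fin m) :
    adjMap φ y i j = mpair (φ (Matrix.single i j 1)) y := rfl

lemma mpair_adj (φ : MMap m n) (x : Mat m) (y : Mat n) :
    mpair (φ x) y = mpair x (adjMap φ y) := by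
  calc mpair (φ x) y
      = ∑ p, ∑ q, ∑ i, ∑ j, x i j * φ (Matrix.single i j 1) p q * y p q := by
        rw [mpair_eq_sum]
        refine Finset.sum_congr rfl fun p _ => Finset.sum_congr rfl fun q _ => ?_
        rw [mmap_apply φ x p q, Finset.sum_mul]
        exact Finset.sum_congr rfl fun i _ => by rw [Finset.sum_mul]
    _ = ∑ i, ∑ j, ∑ p, ∑ q, x i j * φ (Matrix.single i j 1) p q * y p q := sum_comm4 _
    _ = mpair x (adjMap φ y) := by
        rw [mpair_eq_sum]
        refine Finset.sum_congr rfl fun i _ => Finset.sum_congr rfl fun j _ => ?_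
        rw [adjMap_apply, mpair_eq_sum, Finset.mul_sum]
        refine Finset.sum_congr rfl fun p _ => ?_
        rw [Finset.mul_sum]
        exact Finset.sum_congr rfl fun q _ => by ring

lemma adj_comp {k m n : ℕ} (φ : MMap m n) (ψ : MMap k m) :
    adjMap (φ ∘ₗ ψ) = adjMap ψ ∘ₗ adjMap φ := by
  refine LinearMap.ext fun y => ?_
  ext i j
  show mpair ((φ ∘ₗ ψ) (Matrix.single i j 1)) y = adjMap ψ (adjMap φ y) i j
  rw [LinearMap.comp_apply, mpair_adj]
  rfl

lemma stdBasis_collapse (z : Mat n) (p q : Fin n) :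
    (∑ p', ∑ q', z p' q' * Matrix.single p q (1:ℂ) p' q') = z p q := by
  simp [Matrix.single, ite_and, Matrix.of_apply, mul_ite, mul_one, mul_zero,
    Finset.sum_ite_eq, Finset.mem_univ]

lemma adj_adj (φ : MMap m n) : adjMap (adjMap φ) = φ := by
  refine LinearMap.ext fun y => ?_
  ext p q
  show mpair (adjMap φ (Matrix.single p q 1)) y = φ y p q
  rw [mpair_eq_sum, mmap_apply φ y p q]
  refine Finset.sum_congr rfl fun i _ => Finset.sum_congr rfl fun j _ => ?_
  rw [adjMap_apply, mpair_eq_sum]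
  rw [show (∑ p', ∑ q', φ (Matrix.single i j 1) p' q' * Matrix.single p q (1:ℂ) p' q')
      = φ (Matrix.single i j 1) p q from stdBasis_collapse _ p q]
  ring

lemma adj_add (φ ψ : MMap m n) : adjMap (φ + ψ) = adjMap φ + adjMap ψ := by
  refine LinearMap.ext fun y => ?_
  ext i j
  show mpair ((φ + ψ) (Matrix.single i j 1)) y = _
  rw [LinearMap.add_apply, mpair_add_left]
  rfl

lemma choi_adj (φ : MMap m n) :
    choi (adjMap φ) = (choi φ).submatrix Prod.swap Prod.swap := by
  ext ⟨p, i⟩ ⟨q, j⟩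
  show adjMap φ (Matrix.single p q 1) i j = choi φ (i, p) (j, q)
  rw [adjMap_apply, mpair_eq_sum]
  exact stdBasis_collapse _ p q

lemma mpair_submatrix {ι κ : Type*} [Fintype ι] [Fintype κ] [DecidableEq ι] [DecidableEq κ]
    (e : κ ≃ ι) (X Y : Matrix ι ι ℂ) :
    mpair (X.submatrix e e) (Y.submatrix e e) = mpair X Y := by
  rw [mpair_eq_sum, mpair_eq_sum]
  rw [← Equiv.sum_comp e (fun P => ∑ Q, X P Q * Y P Q)]
  refine Finset.sum_congr rfl fun P _ => ?_
  rw [← Equiv.sum_comp e (fun Q => X (e P) Q * Y (e P) Q)]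
  rfl

lemma mapPair_adj_adj (φ ψ : MMap m n) : mapPair (adjMap φ) (adjMap ψ) = mapPair φ ψ := by
  rw [mapPair, mapPair, choi_adj, choi_adj]
  simpa [Equiv.coe_prodComm] using
    mpair_submatrix (Equiv.prodComm (Fin n) (Fin m)) (choi φ) (choi ψ)

lemma mapPair_comp_left {a : ℕ} (φ ψ γ : MMap a a) :
    mapPair (φ ∘ₗ ψ) γ = mapPair ψ (adjMap φ ∘ₗ γ) := by
  rw [mapPair_eq, mapPair_eq]
  refine Finset.sum_congr rfl fun i _ => Finset.sum_congr rfl fun j _ => ?_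
  rw [LinearMap.comp_apply, LinearMap.comp_apply, mpair_adj]

lemma mapPair_comp_right {a : ℕ} (φ ψ γ : MMap a a) :
    mapPair (φ ∘ₗ ψ) γ = mapPair φ (γ ∘ₗ adjMap ψ) := by
  calc mapPair (φ ∘ₗ ψ) γ
      = mapPair (adjMap (φ ∘ₗ ψ)) (adjMap γ) := (mapPair_adj_adj _ _).symm
    _ = mapPair (adjMap ψ ∘ₗ adjMap φ) (adjMap γ) := by rw [adj_comp]
    _ = mapPair (adjMap φ) (ψ ∘ₗ adjMap γ) := by rw [mapPair_comp_left, adj_adj]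
    _ = mapPair (adjMap φ) (adjMap (γ ∘ₗ adjMap ψ)) := by rw [adj_comp, adj_adj]
    _ = mapPair φ (γ ∘ₗ adjMap ψ) := mapPair_adj_adj _ _

lemma choi_id_eq_outer {a : ℕ} :
    choi (LinearMap.id : MMap a a)
      = outer (fun P : Fin a × Fin a => if P.1 = P.2 then 1 else 0) := by
  ext ⟨i, p⟩ ⟨j, q⟩
  show Matrix.single i j (1:ℂ) p q = _
  simp only [outer_apply, Matrix.single, Matrix.of_apply, ite_and, apply_ite,
    star_one, star_zero]
  by_cases h1 : i = p <;> by_cases h2 : j = q <;> simp [h1, h2]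

lemma mapPair_id_nonneg {a : ℕ} {κ : MMap a a} (hκ : IsCP κ) :
    0 ≤ mapPair (LinearMap.id : MMap a a) κ := by
  rw [mapPair, choi_id_eq_outer, mpair_outer_left]
  exact hκ.dotProduct_mulVec_nonneg _

end MapLevel


section CPKraus

open Matrix

set_option linter.unusedSectionVars false

variable {m n : ℕ}

lemma conjT_mul_mul (A : Matrix (Fin m) (Fin n) ℂ) (x : Mat m) (p q : Fin n) :
    (Aᴴ * x * A) p q = ∑ i, ∑ j, star (A i p) * x i j * A j q := by
  simp only [Matrix.mul_apply, Matrix.conjTranspose_apply, Finset.sum_mul]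
  exact Finset.sum_comm

lemma conjT_stdBasis_mul (A : Matrix (Fin m) (Fin n) ℂ) (i j : Fin m) (p q : Fin n) :
    (Aᴴ * Matrix.single i j (1:ℂ) * A) p q = star (A i p) * A j q := by
  rw [conjT_mul_mul]
  simp [Matrix.single, ite_and, Matrix.of_apply, mul_ite, ite_mul, mul_one, mul_zero,
    zero_mul, Finset.sum_ite_eq, Finset.mem_univ]

lemma isCP_of_kraus {κ : Type*} [Fintype κ] (ψ : MMap m n)
    (L : κ → Matrix (Fin m) (Fin n) ℂ) (h : ∀ x, ψ x = ∑ r, (L r)ᴴ * x * L r) : IsCP ψ := by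
  have hchoi : choi ψ = ∑ r, outer (fun P : Fin m × Fin n => L r P.1 P.2) := by
    ext ⟨i, p⟩ ⟨j, q⟩
    rw [choi_apply, h]
    simp only [Matrix.sum_apply]
    refine Finset.sum_congr rfl fun r _ => ?_
    rw [conjT_stdBasis_mul]
    rfl
  rw [IsCP, hchoi]
  exact psd_sum _ _ fun r _ => outer_posSemidef _

lemma kraus_of_isCP {ψ : MMap m n} (h : IsCP ψ) :
    ∃ L : Fin m × Fin n → Matrix (Fin m) (Fin n) ℂ, ∀ x, ψ x = ∑ r, (L r)ᴴ * x * L r := by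
  obtain ⟨B, hB⟩ := psd_eq_conjT_mul_self h
  have hAapp : ∀ (r : Fin m × Fin n) (i : Fin m) (p : Fin n),
      (Matrix.of fun i p => B r (i, p)) i p = B r (i, p) := fun r i p => rfl
  refine ⟨fun r => Matrix.of fun i p => B r (i, p), fun x => ?_⟩
  ext p q
  rw [Matrix.sum_apply]
  calc ψ x p q = ∑ i, ∑ j, x i j * choi ψ (i, p) (j, q) := mmap_apply ψ x p q
    _ = ∑ i, ∑ j, ∑ r, x i j * (star (B r (i, p)) * B r (j, q)) := by
        refine Finset.sum_congr rfl fun i _ => Finset.sum_congr rfl fun j _ => ?_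
        rw [show choi ψ (i, p) (j, q) = (Bᴴ * B) (i, p) (j, q) from by rw [← hB],
          Matrix.mul_apply, Finset.mul_sum]
        exact Finset.sum_congr rfl fun r _ => by rw [Matrix.conjTranspose_apply]
    _ = ∑ r, ∑ i, ∑ j, x i j * (star (B r (i, p)) * B r (j, q)) := by
        rw [show (∑ i, ∑ j, ∑ r, x i j * (star (B r (i, p)) * B r (j, q)))
            = ∑ i, ∑ r, ∑ j, x i j * (star (B r (i, p)) * B r (j, q)) from
          Finset.sum_congr rfl fun i _ => Finset.sum_comm]
        exact Finset.sum_comm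
    _ = ∑ r : Fin m × Fin n,
          ((Matrix.of fun i p => B r (i, p))ᴴ * x * (Matrix.of fun i p => B r (i, p))) p q := by
        refine Finset.sum_congr rfl fun r _ => ?_
        rw [conjT_mul_mul]
        refine Finset.sum_congr rfl fun i _ => Finset.sum_congr rfl fun j _ => ?_
        rw [hAapp, hAapp]
        ring

lemma isCP_comp {k m n : ℕ} {φ : MMap m n} {ψ : MMap k m} (hφ : IsCP φ) (hψ : IsCP ψ) :
    IsCP (φ ∘ₗ ψ) := by
  obtain ⟨L, hL⟩ := kraus_of_isCP hψ
  obtain ⟨N, hN⟩ := kraus_of_isCP hφ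
  refine isCP_of_kraus _ (fun rs : (Fin k × Fin m) × (Fin m × Fin n) => L rs.1 * N rs.2)
    fun x => ?_
  calc (φ ∘ₗ ψ) x = ∑ s, (N s)ᴴ * (∑ r, (L r)ᴴ * x * L r) * N s := by
        rw [LinearMap.comp_apply, hN, hL]
    _ = ∑ s, ∑ r, (N s)ᴴ * ((L r)ᴴ * x * L r) * N s := by
        refine Finset.sum_congr rfl fun s _ => ?_
        rw [Matrix.mul_sum, Matrix.sum_mul]
    _ = ∑ rs : (Fin k × Fin m) × (Fin m × Fin n), (L rs.1 * N rs.2)ᴴ * x * (L rs.1 * N rs.2) := by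
        rw [Fintype.sum_prod_type
          (f := fun rs : (Fin k × Fin m) × (Fin m × Fin n) =>
            (L rs.1 * N rs.2)ᴴ * x * (L rs.1 * N rs.2))]
        rw [Finset.sum_comm]
        refine Finset.sum_congr rfl fun r _ => Finset.sum_congr rfl fun s _ => ?_
        rw [Matrix.conjTranspose_mul]
        noncomm_ring [Matrix.mul_assoc]

lemma isCP_posMap {φ : MMap m n} (hφ : IsCP φ) : IsPosMap φ := by
  obtain ⟨L, hL⟩ := kraus_of_isCP hφ
  intro x hx
  rw [hL]
  exact psd_sum _ _ fun r _ => hx.conjTranspose_mul_mul_same _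

lemma isCP_hermP {φ : MMap m n} (hφ : IsCP φ) : IsHermP φ :=
  (isHermP_iff_choi_isHermitian φ).mpr hφ.1

lemma isCP_add {φ ψ : MMap m n} (hφ : IsCP φ) (hψ : IsCP ψ) : IsCP (φ + ψ) := by
  rw [IsCP, choi_add]
  exact hφ.add hψ

lemma isCP_real_smul {φ : MMap m n} (hφ : IsCP φ) {r : ℝ} (hr : 0 ≤ r) : IsCP (r • φ) := by
  rw [IsCP, choi_real_smul]
  exact psd_real_smul hφ hr

lemma isCP_zero : IsCP (0 : MMap m n) := by
  have h : choi (0 : MMap m n) = 0 := by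
    ext ⟨i, p⟩ ⟨j, q⟩
    rfl
  rw [IsCP, h]
  exact Matrix.PosSemidef.zero

lemma isCP_id {a : ℕ} : IsCP (LinearMap.id : MMap a a) := by
  rw [IsCP, choi_id_eq_outer]
  exact outer_posSemidef _

end CPKraus

section TransposePPT

open Matrix

set_option linter.unusedSectionVars false

variable {m n : ℕ}

/-- Partial transpose (on the first tensor factor). -/
def ptrans (X : Matrix (Fin m × Fin n) (Fin m × Fin n) ℂ) :
    Matrix (Fin m × Fin n) (Fin m × Fin n) ℂ :=
  Matrix.of fun P Q => X (Q.1, P.2) (P.1, Q.2)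

lemma ptrans_apply (X : Matrix (Fin m × Fin n) (Fin m × Fin n) ℂ) (P Q : Fin m × Fin n) :
    ptrans X P Q = X (Q.1, P.2) (P.1, Q.2) := rfl

lemma ptrans_ptrans (X : Matrix (Fin m × Fin n) (Fin m × Fin n) ℂ) : ptrans (ptrans X) = X := by
  ext ⟨i, p⟩ ⟨j, q⟩
  rfl

lemma ptrans_add (X Y : Matrix (Fin m × Fin n) (Fin m × Fin n) ℂ) :
    ptrans (X + Y) = ptrans X + ptrans Y := by
  ext ⟨i, p⟩ ⟨j, q⟩
  rfl

lemma ptrans_real_smul (r : ℝ) (X : Matrix (Fin m × Fin n) (Fin m × Fin n) ℂ) :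
    ptrans (r • X) = r • ptrans X := by
  ext ⟨i, p⟩ ⟨j, q⟩
  rfl

lemma ptrans_zero : ptrans (0 : Matrix (Fin m × Fin n) (Fin m × Fin n) ℂ) = 0 := by
  ext ⟨i, p⟩ ⟨j, q⟩
  rfl

lemma ptrans_trace (X : Matrix (Fin m × Fin n) (Fin m × Fin n) ℂ) :
    (ptrans X).trace = X.trace := by
  simp only [Matrix.trace, Matrix.diag, ptrans_apply]

lemma ptrans_isHermitian {X : Matrix (Fin m × Fin n) (Fin m × Fin n) ℂ} (hX : X.IsHermitian) :
    (ptrans X).IsHermitian := by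
  ext ⟨i, p⟩ ⟨j, q⟩
  show star (ptrans X (j, q) (i, p)) = ptrans X (i, p) (j, q)
  rw [ptrans_apply, ptrans_apply]
  show star (X (i, q) (j, p)) = X (j, p) (i, q)
  rw [← Matrix.conjTranspose_apply, hX.eq]

lemma mpair_ptrans (X Y : Matrix (Fin m × Fin n) (Fin m × Fin n) ℂ) :
    mpair X (ptrans Y) = mpair (ptrans X) Y := by
  have h1 : mpair X (ptrans Y) = ∑ i, ∑ p, ∑ j, ∑ q, X (i, p) (j, q) * Y (j, p) (i, q) := by
    rw [mpair_eq_sum, Fintype.sum_prod_type]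
    refine Finset.sum_congr rfl fun i _ => Finset.sum_congr rfl fun p _ => ?_
    rw [Fintype.sum_prod_type]
    rfl
  have h2 : mpair (ptrans X) Y = ∑ i, ∑ p, ∑ j, ∑ q, X (j, p) (i, q) * Y (i, p) (j, q) := by
    rw [mpair_eq_sum, Fintype.sum_prod_type]
    refine Finset.sum_congr rfl fun i _ => Finset.sum_congr rfl fun p _ => ?_
    rw [Fintype.sum_prod_type]
    rfl
  rw [h1, h2]
  exact (sum_swap13 (fun a b c d => X (c, b) (a, d) * Y (a, b) (c, d))).symm

lemma tmap_apply {a : ℕ} (x : Mat a) : tmap a x = xᵀ := rfl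

lemma choi_comp_tmap {a : ℕ} (φ : MMap a a) : choi (φ ∘ₗ tmap a) = ptrans (choi φ) := by
  ext ⟨i, p⟩ ⟨j, q⟩
  show φ ((Matrix.single i j (1:ℂ))ᵀ) p q = choi φ (j, p) (i, q)
  rw [transpose_stdBasisMatrix]
  rfl

lemma mem_CCP_iff {a : ℕ} (χ : MMap a a) : χ ∈ CCPset a ↔ (ptrans (choi χ)).PosSemidef := by
  constructor
  · rintro ⟨φ, hφ, rfl⟩
    rw [choi_comp_tmap, ptrans_ptrans]
    exact hφ
  · intro h
    refine ⟨ofChoi (ptrans (choi χ)), ?_, ?_⟩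
    · rw [IsCP, choi_ofChoi]
      exact h
    · refine choi_inj ?_
      rw [choi_comp_tmap, choi_ofChoi, ptrans_ptrans]

lemma tmap_tmap {a : ℕ} : tmap a ∘ₗ tmap a = LinearMap.id := by
  refine LinearMap.ext fun x => ?_
  show (xᵀ)ᵀ = x
  rw [Matrix.transpose_transpose]

lemma choi_tconj {a : ℕ} (φ : MMap a a) :
    choi (tmap a ∘ₗ φ ∘ₗ tmap a) = (choi φ)ᵀ := by
  ext ⟨i, p⟩ ⟨j, q⟩
  show (φ ((Matrix.single i j (1:ℂ))ᵀ))ᵀ p q = choi φ (j, q) (i, p)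
  rw [transpose_stdBasisMatrix]
  rfl

lemma isCP_tconj {a : ℕ} {φ : MMap a a} (hφ : IsCP φ) : IsCP (tmap a ∘ₗ φ ∘ₗ tmap a) := by
  rw [IsCP, choi_tconj]
  exact hφ.transpose

lemma mem_CP_iff {a b : ℕ} (φ : MMap a b) : φ ∈ CPset a b ↔ IsCP φ := Iff.rfl

lemma ppt_isCP {a : ℕ} {φ : MMap a a} (h : φ ∈ PPTset a) : IsCP φ := h.1

lemma ppt_hermP {a : ℕ} {φ : MMap a a} (h : φ ∈ PPTset a) : IsHermP φ := isCP_hermP h.1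

-- t ∘ CP ∘ t stays CP hence: t ∘ PPT = PPT etc.
lemma tmap_comp_mem_PPT {a : ℕ} {φ : MMap a a} (h : φ ∈ PPTset a) :
    tmap a ∘ₗ φ ∈ PPTset a := by
  obtain ⟨hcp, χ, hχ, hφt⟩ := h
  constructor
  · -- tmap ∘ φ = (tmap ∘ χ ∘ tmap) with χ CP
    have : tmap a ∘ₗ φ = (tmap a ∘ₗ χ ∘ₗ tmap a) := by rw [hφt]
    rw [mem_CP_iff, this]
    exact isCP_tconj hχ
  · -- tmap ∘ φ = (tmap ∘ φ ∘ tmap) ∘ tmap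
    refine ⟨tmap a ∘ₗ φ ∘ₗ tmap a, isCP_tconj hcp, ?_⟩
    simp only [LinearMap.comp_assoc, tmap_tmap, LinearMap.comp_id]

lemma comp_tmap_mem_PPT {a : ℕ} {φ : MMap a a} (h : φ ∈ PPTset a) :
    φ ∘ₗ tmap a ∈ PPTset a := by
  obtain ⟨hcp, χ, hχ, hφt⟩ := h
  constructor
  · rw [mem_CP_iff, hφt, LinearMap.comp_assoc, tmap_tmap, LinearMap.comp_id]
    exact hχ
  · exact ⟨φ, hcp, rfl⟩

lemma ppt_comp_cp_mem {a : ℕ} {φ ψ : MMap a a} (hφ : φ ∈ PPTset a) (hψ : IsCP ψ) :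
    φ ∘ₗ ψ ∈ PPTset a := by
  obtain ⟨hcp, χ, hχ, hφt⟩ := hφ
  constructor
  · exact isCP_comp hcp hψ
  · refine ⟨χ ∘ₗ (tmap a ∘ₗ ψ ∘ₗ tmap a), isCP_comp hχ (isCP_tconj hψ), ?_⟩
    rw [hφt]
    simp only [LinearMap.comp_assoc, tmap_tmap, LinearMap.comp_id]

lemma cp_comp_ppt_mem {a : ℕ} {φ ψ : MMap a a} (hφ : IsCP φ) (hψ : ψ ∈ PPTset a) :
    φ ∘ₗ ψ ∈ PPTset a := by
  obtain ⟨hcp, χ, hχ, hψt⟩ := hψ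
  constructor
  · exact isCP_comp hφ hcp
  · refine ⟨φ ∘ₗ χ, isCP_comp hφ hχ, ?_⟩
    rw [hψt, LinearMap.comp_assoc]

lemma ppt_comp_ppt_mem {a : ℕ} {φ ψ : MMap a a} (hφ : φ ∈ PPTset a) (hψ : ψ ∈ PPTset a) :
    φ ∘ₗ ψ ∈ PPTset a := ppt_comp_cp_mem hφ hψ.1

lemma adj_isCP {φ : MMap m n} (hφ : IsCP φ) : IsCP (adjMap φ) := by
  rw [IsCP, choi_adj]
  exact hφ.submatrix _

lemma adj_mem_PPT {a : ℕ} {φ : MMap a a} (h : φ ∈ PPTset a) : adjMap φ ∈ PPTset a := by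
  obtain ⟨hcp, χ, hχ, hφt⟩ := h
  constructor
  · exact adj_isCP hcp
  · -- adj (χ ∘ t) = adj t ∘ adj χ = t ∘ adj χ = (t ∘ adj χ ∘ t) ∘ t
    have hadjt : adjMap (tmap a) = tmap a := by
      refine LinearMap.ext fun y => ?_
      ext i j
      rw [adjMap_apply, mpair_eq_sum]
      show (∑ p, ∑ q, (Matrix.single i j (1:ℂ))ᵀ p q * y p q) = yᵀ i j
      rw [transpose_stdBasisMatrix]
      have := stdBasis_collapse (n := a) y j i
      rw [show (∑ p, ∑ q, Matrix.single j i (1:ℂ) p q * y p q)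
          = ∑ p, ∑ q, y p q * Matrix.single j i (1:ℂ) p q from
        Finset.sum_congr rfl fun p _ => Finset.sum_congr rfl fun q _ => mul_comm _ _]
      rw [this]
      rfl
    rw [hφt, adj_comp, hadjt]
    refine ⟨tmap a ∘ₗ adjMap χ ∘ₗ tmap a, isCP_tconj (adj_isCP hχ), ?_⟩
    simp only [LinearMap.comp_assoc, tmap_tmap, LinearMap.comp_id]

lemma adj_hermP {φ : MMap m n} (h : IsHermP φ) : IsHermP (adjMap φ) := by
  rw [isHermP_iff_choi_isHermitian] at h ⊢
  rw [choi_adj]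
  ext P Q
  show star ((choi φ).submatrix Prod.swap Prod.swap Q P) = _
  rw [Matrix.submatrix_apply, Matrix.submatrix_apply, ← Matrix.conjTranspose_apply, h.eq]

end TransposePPT


section PosHerm

open Matrix

set_option linter.unusedSectionVars false

variable {ι : Type*} [Fintype ι] [DecidableEq ι]

lemma conj_quad (A : Matrix ι ι ℂ) (v : ι → ℂ) :
    star (star v ⬝ᵥ A *ᵥ v) = star v ⬝ᵥ Aᴴ *ᵥ v := by
  calc star (star v ⬝ᵥ A *ᵥ v)
      = ∑ P, ∑ Q, v P * star (A P Q) * star (v Q) := by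
        rw [dot_eq_sum, star_sum]
        refine Finset.sum_congr rfl fun P _ => ?_
        rw [star_sum]
        refine Finset.sum_congr rfl fun Q _ => ?_
        rw [star_mul', star_mul', star_star]
    _ = ∑ Q, ∑ P, v P * star (A P Q) * star (v Q) := Finset.sum_comm
    _ = star v ⬝ᵥ Aᴴ *ᵥ v := by
        rw [dot_eq_sum]
        refine Finset.sum_congr rfl fun Q _ => Finset.sum_congr rfl fun P _ => ?_
        rw [Matrix.conjTranspose_apply]
        ring

lemma herm_quad_real {A : Matrix ι ι ℂ} (hA : A.IsHermitian) (v : ι → ℂ) :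
    (star v ⬝ᵥ A *ᵥ v).im = 0 := by
  have h := conj_quad A v
  rw [hA.eq] at h
  exact Complex.conj_eq_iff_im.mp h

lemma herm_decomp {A : Matrix ι ι ℂ} (hA : A.IsHermitian) :
    ∃ p q : Matrix ι ι ℂ, p.PosSemidef ∧ q.PosSemidef ∧ A = p - q := by
  classical
  set c : ℝ := ∑ P, ∑ Q, ‖A P Q‖ with hc
  have hc0 : 0 ≤ c :=
    Finset.sum_nonneg fun P _ => Finset.sum_nonneg fun Q _ => norm_nonneg _
  have hone : (c • (1 : Matrix ι ι ℂ)).PosSemidef := psd_real_smul Matrix.PosSemidef.one hc0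
  refine ⟨A + c • 1, c • 1, Matrix.PosSemidef.of_dotProduct_mulVec_nonneg (hA.add hone.1) ?_,
    hone, by abel⟩
  intro v
  set S : ℝ := ∑ P, Complex.normSq (v P) with hS
  have hS0 : 0 ≤ S := Finset.sum_nonneg fun P _ => Complex.normSq_nonneg _
  have hSsum : (∑ P, star (v P) * v P) = (S : ℂ) := by
    rw [hS]
    push_cast
    refine Finset.sum_congr rfl fun P _ => ?_
    rw [Complex.normSq_eq_conj_mul_self]
    rfl
  have hsplit : star v ⬝ᵥ (A + c • 1) *ᵥ v
      = (star v ⬝ᵥ A *ᵥ v) + (c : ℂ) * (S : ℂ) := by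
    rw [Matrix.add_mulVec, dotProduct_add]
    congr 1
    rw [dot_eq_sum, ← hSsum, Finset.mul_sum]
    refine Finset.sum_congr rfl fun P _ => ?_
    rw [Finset.sum_eq_single P]
    · have h1 : (c • (1 : Matrix ι ι ℂ)) P P = (c : ℂ) := by
        simp [Matrix.smul_apply, Matrix.one_apply, Complex.real_smul]
      rw [h1]; ring
    · intro Q _ hQ
      have h0 : (c • (1 : Matrix ι ι ℂ)) P Q = 0 := by
        simp [Matrix.smul_apply, Matrix.one_apply, (Ne.symm hQ : ¬ P = Q)]
      rw [h0]; ring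
    · intro h; exact absurd (Finset.mem_univ P) h
  have hquad_bound : ∀ P, Complex.normSq (v P) ≤ S :=
    fun P => Finset.single_le_sum (fun Q _ => Complex.normSq_nonneg _) (Finset.mem_univ P)
  have habs : ‖star v ⬝ᵥ A *ᵥ v‖ ≤ c * S := by
    rw [dot_eq_sum]
    refine le_trans (norm_sum_le _ _) ?_
    rw [hc, Finset.sum_mul]
    refine Finset.sum_le_sum fun P _ => ?_
    refine le_trans (norm_sum_le _ _) ?_
    rw [Finset.sum_mul]
    refine Finset.sum_le_sum fun Q _ => ?_
    rw [norm_mul, norm_mul]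
    have hP : ‖star (v P)‖ = ‖v P‖ := Complex.norm_conj _
    rw [hP]
    have h1 : (‖v P‖)^2 ≤ S := by rw [Complex.sq_norm]; exact hquad_bound P
    have h2 : (‖v Q‖)^2 ≤ S := by rw [Complex.sq_norm]; exact hquad_bound Q
    have h3 : ‖v P‖ * ‖v Q‖ ≤ S := by
      nlinarith [sq_nonneg (‖v P‖ - ‖v Q‖),
        norm_nonneg (v P), norm_nonneg (v Q)]
    calc ‖v P‖ * ‖A P Q‖ * ‖v Q‖
        = ‖A P Q‖ * (‖v P‖ * ‖v Q‖) := by ring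
      _ ≤ ‖A P Q‖ * S := by
          exact mul_le_mul_of_nonneg_left h3 (norm_nonneg _)
  rw [hsplit, Complex.le_def]
  constructor
  · have hre : |(star v ⬝ᵥ A *ᵥ v).re| ≤ c * S :=
      le_trans (Complex.abs_re_le_norm _) habs
    have himpart : ((c : ℂ) * (S : ℂ)).re = c * S := by
      rw [← Complex.ofReal_mul]; exact Complex.ofReal_re _
    rw [Complex.add_re, himpart]
    have := abs_le.mp hre
    simp only [Complex.zero_re]
    linarith [this.1]
  · rw [Complex.add_im, herm_quad_real hA v]
    have : ((c : ℂ) * (S : ℂ)).im = 0 := by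
      rw [← Complex.ofReal_mul]; exact Complex.ofReal_im _
    simp [this]

end PosHerm

section PosMapHerm

open Matrix

set_option linter.unusedSectionVars false

variable {m n : ℕ}

lemma isPosMap_hermP {φ : MMap m n} (hφ : IsPosMap φ) : IsHermP φ := by
  have hherm : ∀ h : Mat m, h.IsHermitian → (φ h).IsHermitian := by
    intro h hh
    obtain ⟨p, q, hp, hq, rfl⟩ := herm_decomp hh
    rw [map_sub]
    exact ((hφ p hp).1).sub ((hφ q hq).1)
  have key : ∀ h k : Mat m, h.IsHermitian → k.IsHermitian →
      φ ((h + Complex.I • k)ᴴ) = (φ (h + Complex.I • k))ᴴ := by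
    intro h k hh hk
    have h1 : (h + Complex.I • k)ᴴ = h - Complex.I • k := by
      rw [Matrix.conjTranspose_add, Matrix.conjTranspose_smul, hh.eq, hk.eq,
        Complex.star_def, Complex.conj_I, neg_smul]
      abel
    rw [h1, map_sub, map_add]
    simp only [LinearMap.map_smul]
    rw [Matrix.conjTranspose_add, Matrix.conjTranspose_smul, (hherm h hh).eq, (hherm k hk).eq,
      Complex.star_def, Complex.conj_I, neg_smul]
    abel
  intro x
  have hh₁ : ((2⁻¹ : ℂ) • (x + xᴴ)).IsHermitian := by
    show ((2⁻¹ : ℂ) • (x + xᴴ))ᴴ = (2⁻¹ : ℂ) • (x + xᴴ)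
    rw [Matrix.conjTranspose_smul, Matrix.conjTranspose_add, Matrix.conjTranspose_conjTranspose]
    rw [show star (2⁻¹ : ℂ) = (2⁻¹ : ℂ) from by norm_num]
    rw [add_comm]
  have hh₂ : ((-(2⁻¹) * Complex.I : ℂ) • (x - xᴴ)).IsHermitian := by
    show ((-(2⁻¹) * Complex.I : ℂ) • (x - xᴴ))ᴴ = (-(2⁻¹) * Complex.I : ℂ) • (x - xᴴ)
    rw [Matrix.conjTranspose_smul, Matrix.conjTranspose_sub, Matrix.conjTranspose_conjTranspose]
    have hstar : star (-(2⁻¹) * Complex.I : ℂ) = (2⁻¹) * Complex.I := by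
      simp [Complex.star_def, Complex.conj_I]
    rw [hstar, show (xᴴ - x) = (-1 : ℂ) • (x - xᴴ) from by rw [neg_one_smul]; abel]
    rw [smul_smul]
    congr 1
    ring
  have hx : x = (2⁻¹ : ℂ) • (x + xᴴ) + Complex.I • ((-(2⁻¹) * Complex.I : ℂ) • (x - xᴴ)) := by
    rw [smul_smul]
    have h5 : Complex.I * (-(2⁻¹) * Complex.I) = (2⁻¹ : ℂ) := by
      rw [show Complex.I * (-(2⁻¹) * Complex.I) = -(2⁻¹) * (Complex.I * Complex.I) from by ring,
        Complex.I_mul_I]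
      ring
    rw [h5, smul_add, smul_sub]
    module
  rw [hx]
  exact key _ _ hh₁ hh₂

lemma adj_posMap {φ : MMap m n} (hφ : IsPosMap φ) : IsPosMap (adjMap φ) := by
  have hherm : IsHermP (adjMap φ) := adj_hermP (isPosMap_hermP hφ)
  intro b hb
  refine Matrix.PosSemidef.of_dotProduct_mulVec_nonneg ?_ ?_
  · exact (hherm b).symm.trans (congrArg _ hb.1)
  · intro v
    rw [← mpair_outer_left, ← mpair_adj]
    exact mpair_nonneg (hφ _ (outer_posSemidef v)) hb

lemma isPosMap_comp {k m n : ℕ} {φ : MMap m n} {ψ : MMap k m} (hφ : IsPosMap φ)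
    (hψ : IsPosMap ψ) : IsPosMap (φ ∘ₗ ψ) := fun x hx => hφ _ (hψ x hx)

lemma hermP_add {φ ψ : MMap m n} (hφ : IsHermP φ) (hψ : IsHermP ψ) : IsHermP (φ + ψ) := by
  intro x
  simp [LinearMap.add_apply, hφ x, hψ x, Matrix.conjTranspose_add]

lemma tmap_hermP {a : ℕ} : IsHermP (tmap a) := by
  intro x
  show (xᴴ)ᵀ = (xᵀ)ᴴ
  ext i j
  rfl

end PosMapHerm


section Instances

noncomputable instance matLCS {ι : Type*} : LocallyConvexSpace ℝ (Matrix ι ι ℂ) :=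
  inferInstanceAs (LocallyConvexSpace ℝ (ι → ι → ℂ))

instance matFC {ι : Type*} [Countable ι] :
    FirstCountableTopology (Matrix ι ι ℂ) :=
  inferInstanceAs (FirstCountableTopology (ι → ι → ℂ))

instance matFU {ι : Type*} [Countable ι] : FrechetUrysohnSpace (Matrix ι ι ℂ) :=
  inferInstanceAs (FrechetUrysohnSpace (ι → ι → ℂ))

instance matSeq {ι : Type*} [Countable ι] : SequentialSpace (Matrix ι ι ℂ) :=
  inferInstanceAs (SequentialSpace (ι → ι → ℂ))

end Instances

section DecCone

open Matrix

set_option linter.unusedSectionVars false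

lemma ccp_add {a : ℕ} {χ₁ χ₂ : MMap a a} (h1 : χ₁ ∈ CCPset a) (h2 : χ₂ ∈ CCPset a) :
    χ₁ + χ₂ ∈ CCPset a := by
  obtain ⟨φ₁, hφ₁, rfl⟩ := h1
  obtain ⟨φ₂, hφ₂, rfl⟩ := h2
  exact ⟨φ₁ + φ₂, isCP_add hφ₁ hφ₂, (LinearMap.add_comp _ _ _).symm⟩

lemma ccp_real_smul {a : ℕ} {χ : MMap a a} (h : χ ∈ CCPset a) {r : ℝ} (hr : 0 ≤ r) :
    r • χ ∈ CCPset a := by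
  obtain ⟨φ, hφ, rfl⟩ := h
  exact ⟨r • φ, isCP_real_smul hφ hr, (LinearMap.smul_comp _ _ _).symm⟩

lemma ccp_zero {a : ℕ} : (0 : MMap a a) ∈ CCPset a :=
  ⟨0, isCP_zero, (LinearMap.zero_comp _).symm⟩

lemma ccp_hermP {a : ℕ} {χ : MMap a a} (h : χ ∈ CCPset a) : IsHermP χ := by
  obtain ⟨φ, hφ, rfl⟩ := h
  exact isHermP_comp (isCP_hermP hφ) tmap_hermP

lemma mem_DEC_iff {a : ℕ} (χ : MMap a a) :
    χ ∈ DECset a ↔ ∃ φ ∈ CPset a a, ∃ ψ ∈ CCPset a, χ = φ + ψ := by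
  constructor
  · intro h
    have hconv : Convex ℝ {χ : MMap a a | ∃ φ ∈ CPset a a, ∃ ψ ∈ CCPset a, χ = φ + ψ} := by
      rintro x ⟨φ₁, hφ₁, ψ₁, hψ₁, rfl⟩ y ⟨φ₂, hφ₂, ψ₂, hψ₂, rfl⟩ s t hs ht hst
      refine ⟨s • φ₁ + t • φ₂, isCP_add (isCP_real_smul hφ₁ hs) (isCP_real_smul hφ₂ ht),
        s • ψ₁ + t • ψ₂, ccp_add (ccp_real_smul hψ₁ hs) (ccp_real_smul hψ₂ ht), ?_⟩
      rw [smul_add, smul_add]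
      abel
    have hsub : CPset a a ∪ CCPset a
        ⊆ {χ : MMap a a | ∃ φ ∈ CPset a a, ∃ ψ ∈ CCPset a, χ = φ + ψ} := by
      rintro χ (hχ | hχ)
      exacts [⟨χ, hχ, 0, ccp_zero, (add_zero χ).symm⟩,
        ⟨0, isCP_zero, χ, hχ, (zero_add χ).symm⟩]
    exact convexHull_min hsub hconv h
  · rintro ⟨φ, hφ, ψ, hψ, rfl⟩
    have h1 : (2 : ℝ) • φ ∈ convexHull ℝ (CPset a a ∪ CCPset a) :=
      subset_convexHull ℝ _ (Or.inl (isCP_real_smul hφ (by norm_num)))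
    have h2 : (2 : ℝ) • ψ ∈ convexHull ℝ (CPset a a ∪ CCPset a) :=
      subset_convexHull ℝ _ (Or.inr (ccp_real_smul hψ (by norm_num)))
    have h3 := (convex_convexHull ℝ (CPset a a ∪ CCPset a)) h1 h2
      (by norm_num : (0:ℝ) ≤ 1/2) (by norm_num : (0:ℝ) ≤ 1/2) (by norm_num)
    have h4 : (1/2 : ℝ) • ((2:ℝ) • φ) + (1/2 : ℝ) • ((2:ℝ) • ψ) = φ + ψ := by
      rw [smul_smul, smul_smul]
      norm_num
    rwa [h4] at h3

lemma dec_hermP {a : ℕ} {χ : MMap a a} (h : χ ∈ DECset a) : IsHermP χ := by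
  obtain ⟨φ, hφ, ψ, hψ, rfl⟩ := (mem_DEC_iff χ).mp h
  exact hermP_add (isCP_hermP hφ) (ccp_hermP hψ)

end DecCone

section SepConeLemmas

open Matrix

set_option linter.unusedSectionVars false

variable {m n : ℕ}

/-- The generating set of `SepCone`. -/
def sepGen (m n : ℕ) : Set (Matrix (Fin m × Fin n) (Fin m × Fin n) ℂ) :=
  {X | ∃ (r : ℕ) (x : Fin r → Mat m) (y : Fin r → Mat n),
    (∀ i, (x i).PosSemidef ∧ (y i).PosSemidef) ∧ X = ∑ i, x i ⊗ₖ y i}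

lemma sepCone_eq (m n : ℕ) : SepCone m n = closure (sepGen m n) := rfl

lemma kron_apply (x : Mat m) (y : Mat n) (i j : Fin m) (p q : Fin n) :
    (x ⊗ₖ y) (i, p) (j, q) = x i j * y p q := rfl

lemma sepGen_zero : (0 : Matrix (Fin m × Fin n) (Fin m × Fin n) ℂ) ∈ sepGen m n := by
  refine ⟨0, fun i => i.elim0, fun i => i.elim0, fun i => i.elim0, ?_⟩
  simp

lemma sepGen_add {X Y : Matrix (Fin m × Fin n) (Fin m × Fin n) ℂ}
    (hX : X ∈ sepGen m n) (hY : Y ∈ sepGen m n) : X + Y ∈ sepGen m n := by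
  obtain ⟨r, x, y, hxy, rfl⟩ := hX
  obtain ⟨r', x', y', hxy', rfl⟩ := hY
  refine ⟨r + r', Fin.append x x', Fin.append y y', ?_, ?_⟩
  · intro i
    refine Fin.addCases (fun i => ?_) (fun i => ?_) i
    · rw [Fin.append_left, Fin.append_left]; exact hxy i
    · rw [Fin.append_right, Fin.append_right]; exact hxy' i
  · rw [Fin.sum_univ_add]
    congr 1
    · exact Finset.sum_congr rfl fun i _ => by rw [Fin.append_left, Fin.append_left]
    · exact Finset.sum_congr rfl fun i _ => by rw [Fin.append_right, Fin.append_right]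

lemma real_smul_kron (r : ℝ) (x : Mat m) (y : Mat n) :
    r • (x ⊗ₖ y) = (r • x) ⊗ₖ y := by
  ext ⟨i, p⟩ ⟨j, q⟩
  show r • (x i j * y p q) = (r • x i j) * y p q
  rw [smul_mul_assoc]

lemma sepGen_real_smul {X : Matrix (Fin m × Fin n) (Fin m × Fin n) ℂ}
    (hX : X ∈ sepGen m n) {r : ℝ} (hr : 0 ≤ r) : r • X ∈ sepGen m n := by
  obtain ⟨s, x, y, hxy, rfl⟩ := hX
  refine ⟨s, fun i => r • x i, y, fun i => ⟨psd_real_smul (hxy i).1 hr, (hxy i).2⟩, ?_⟩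
  rw [Finset.smul_sum]
  exact Finset.sum_congr rfl fun i _ => real_smul_kron r (x i) (y i)

lemma kron_isHermitian {x : Mat m} {y : Mat n} (hx : x.IsHermitian) (hy : y.IsHermitian) :
    (x ⊗ₖ y).IsHermitian := by
  ext ⟨i, p⟩ ⟨j, q⟩
  show star ((x ⊗ₖ y) (j, q) (i, p)) = (x ⊗ₖ y) (i, p) (j, q)
  rw [kron_apply, kron_apply, star_mul']
  have h1 : star (x j i) = x i j := congrFun (congrFun hx.eq i) j
  have h2 : star (y q p) = y p q := congrFun (congrFun hy.eq p) q
  rw [h1, h2, mul_comm]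

lemma sepGen_isHermitian {X : Matrix (Fin m × Fin n) (Fin m × Fin n) ℂ}
    (hX : X ∈ sepGen m n) : X.IsHermitian := by
  obtain ⟨r, x, y, hxy, rfl⟩ := hX
  show (∑ i, x i ⊗ₖ y i)ᴴ = ∑ i, x i ⊗ₖ y i
  rw [Matrix.conjTranspose_sum]
  exact Finset.sum_congr rfl fun i _ => (kron_isHermitian (hxy i).1.1 (hxy i).2.1).eq

lemma sepGen_convex : Convex ℝ (sepGen m n) := by
  intro X hX Y hY s t hs ht _
  exact sepGen_add (sepGen_real_smul hX hs) (sepGen_real_smul hY ht)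

lemma sepCone_convex : Convex ℝ (SepCone m n) := by
  rw [sepCone_eq]
  exact sepGen_convex.closure

lemma sepCone_closed : IsClosed (SepCone m n) := isClosed_closure

lemma sepCone_zero : (0 : Matrix (Fin m × Fin n) (Fin m × Fin n) ℂ) ∈ SepCone m n :=
  subset_closure sepGen_zero

lemma sepCone_add {X Y : Matrix (Fin m × Fin n) (Fin m × Fin n) ℂ}
    (hX : X ∈ SepCone m n) (hY : Y ∈ SepCone m n) : X + Y ∈ SepCone m n := by
  rw [sepCone_eq] at hX hY ⊢
  obtain ⟨u, hu, hulim⟩ := mem_closure_iff_seq_limit.mp hX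
  obtain ⟨w, hw, hwlim⟩ := mem_closure_iff_seq_limit.mp hY
  exact mem_closure_of_tendsto (hulim.add hwlim)
    (Filter.Eventually.of_forall fun k => sepGen_add (hu k) (hw k))

lemma sepCone_real_smul {X : Matrix (Fin m × Fin n) (Fin m × Fin n) ℂ}
    (hX : X ∈ SepCone m n) {r : ℝ} (hr : 0 ≤ r) : r • X ∈ SepCone m n := by
  rw [sepCone_eq] at hX ⊢
  obtain ⟨u, hu, hulim⟩ := mem_closure_iff_seq_limit.mp hX
  exact mem_closure_of_tendsto (hulim.const_smul r)
    (Filter.Eventually.of_forall fun k => sepGen_real_smul (hu k) hr)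

lemma sepCone_isHermitian {X : Matrix (Fin m × Fin n) (Fin m × Fin n) ℂ}
    (hX : X ∈ SepCone m n) : X.IsHermitian := by
  rw [sepCone_eq] at hX
  have hsub : closure (sepGen m n)
      ⊆ {A : Matrix (Fin m × Fin n) (Fin m × Fin n) ℂ | Aᴴ = A} :=
    closure_minimal (fun A hA => sepGen_isHermitian hA)
      (isClosed_eq continuous_conjT continuous_id)
  exact hsub hX

lemma mem_sepGen_kron {x : Mat m} {y : Mat n} (hx : x.PosSemidef) (hy : y.PosSemidef) :
    x ⊗ₖ y ∈ sepGen m n := by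
  refine ⟨1, fun _ => x, fun _ => y, fun _ => ⟨hx, hy⟩, ?_⟩
  rw [Fin.sum_univ_one]

lemma mpair_kron_choi (x : Mat m) (y : Mat n) (π : MMap m n) :
    mpair (x ⊗ₖ y) (choi π) = mpair y (π x) := by
  have h1 : mpair (x ⊗ₖ y) (choi π)
      = ∑ i, ∑ j, ∑ p, ∑ q, x i j * y p q * choi π (i, p) (j, q) := by
    rw [mpair_eq_sum, Fintype.sum_prod_type]
    rw [show (∑ i, ∑ p, ∑ Q : Fin m × Fin n, (x ⊗ₖ y) (i, p) Q * choi π (i, p) Q)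
        = ∑ i, ∑ p, ∑ j, ∑ q, x i j * y p q * choi π (i, p) (j, q) from
      Finset.sum_congr rfl fun i _ => Finset.sum_congr rfl fun p _ => by
        rw [Fintype.sum_prod_type]; rfl]
    exact Finset.sum_congr rfl fun i _ => Finset.sum_comm
  have h2 : mpair y (π x) = ∑ i, ∑ j, ∑ p, ∑ q, x i j * y p q * choi π (i, p) (j, q) := by
    rw [mpair_eq_sum]
    rw [show (∑ p, ∑ q, y p q * π x p q)
        = ∑ p, ∑ q, ∑ i, ∑ j, x i j * y p q * choi π (i, p) (j, q) from
      Finset.sum_congr rfl fun p _ => Finset.sum_congr rfl fun q _ => by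
        rw [mmap_apply π x p q, Finset.mul_sum]
        refine Finset.sum_congr rfl fun i _ => ?_
        rw [Finset.mul_sum]
        refine Finset.sum_congr rfl fun j _ => ?_
        rw [choi_apply]
        ring]
    exact sum_comm4 _
  rw [h1, h2]

lemma sep_pair_nonneg {X : Matrix (Fin m × Fin n) (Fin m × Fin n) ℂ}
    (hX : X ∈ SepCone m n) {π : MMap m n} (hπ : IsPosMap π) : 0 ≤ mpair X (choi π) := by
  rw [sepCone_eq] at hX
  have hsub : closure (sepGen m n)
      ⊆ {A : Matrix (Fin m × Fin n) (Fin m × Fin n) ℂ | 0 ≤ mpair A (choi π)} := by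
    refine closure_minimal ?_ (isClosed_nonneg_complex.preimage (continuous_mpair_left _))
    rintro A ⟨r, x, y, hxy, rfl⟩
    show 0 ≤ mpair (∑ i, x i ⊗ₖ y i) (choi π)
    rw [mpair_sum_left]
    refine Finset.sum_nonneg fun i _ => ?_
    rw [mpair_kron_choi]
    exact mpair_nonneg (hxy i).2 (hπ _ (hxy i).1)
  exact hsub hX

lemma sp1_pair_nonneg {θ : MMap m n} (hθ : θ ∈ SP1set m n) {π : MMap m n}
    (hπ : IsPosMap π) : 0 ≤ mapPair θ π :=
  sep_pair_nonneg hθ.2 hπ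

lemma sp1_add {θ₁ θ₂ : MMap m n} (h1 : θ₁ ∈ SP1set m n) (h2 : θ₂ ∈ SP1set m n) :
    θ₁ + θ₂ ∈ SP1set m n := by
  refine ⟨hermP_add h1.1 h2.1, ?_⟩
  rw [choi_add]
  exact sepCone_add h1.2 h2.2

end SepConeLemmas


section Separation

open Matrix

set_option linter.unusedSectionVars false

variable {ι : Type*} [Fintype ι] [DecidableEq ι]

lemma sum_comm4' {α β γ δ M : Type*} [Fintype α] [Fintype β] [Fintype γ] [Fintype δ]
    [AddCommMonoid M] (f : α → β → γ → δ → M) :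
    ∑ a, ∑ b, ∑ c, ∑ d, f a b c d = ∑ c, ∑ a, ∑ d, ∑ b, f a b c d := by
  rw [show (∑ a, ∑ b, ∑ c, ∑ d, f a b c d) = ∑ a, ∑ c, ∑ b, ∑ d, f a b c d from
    Finset.sum_congr rfl fun a _ => Finset.sum_comm]
  rw [show (∑ a, ∑ c, ∑ b, ∑ d, f a b c d) = ∑ c, ∑ a, ∑ b, ∑ d, f a b c d from
    Finset.sum_comm]
  exact Finset.sum_congr rfl fun c _ => Finset.sum_congr rfl fun a _ => Finset.sum_comm

lemma seph {K : Set (Matrix ι ι ℂ)} (hconv : Convex ℝ K) (hclosed : IsClosed K)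
    (hcone : ∀ X ∈ K, ∀ r : ℝ, 0 ≤ r → r • X ∈ K) (h0 : (0 : Matrix ι ι ℂ) ∈ K)
    (hherm : ∀ X ∈ K, X.IsHermitian) {C : Matrix ι ι ℂ} (hC : C.IsHermitian) (hCK : C ∉ K) :
    ∃ W : Matrix ι ι ℂ, W.IsHermitian ∧ (∀ Y ∈ K, 0 ≤ mpair W Y) ∧ ¬(0 ≤ mpair W C) := by
  obtain ⟨f, u, hfC, hfK⟩ := geometric_hahn_banach_point_closed hconv hclosed hCK
  have hu0 : u < 0 := by
    have h := hfK 0 h0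
    simpa using h
  have hfK0 : ∀ Y ∈ K, (0 : ℝ) ≤ f Y := by
    intro Y hY
    by_contra hneg
    push_neg at hneg
    have hrpos : 0 < u / f Y := div_pos_of_neg_of_neg hu0 hneg
    have h1 := hfK ((2 * (u / f Y)) • Y) (hcone Y hY (2 * (u / f Y)) (by positivity))
    rw [_root_.map_smul, smul_eq_mul] at h1
    have h2 : 2 * (u / f Y) * f Y = 2 * u := by
      rw [mul_assoc, div_mul_cancel₀ u (ne_of_lt hneg)]
    rw [h2] at h1
    linarith
  set W0 : Matrix ι ι ℂ := Matrix.of fun P Q =>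
    (f (Matrix.single P Q 1) : ℂ) - Complex.I * (f (Complex.I • Matrix.single P Q 1) : ℂ)
    with hW0
  have hW0app : ∀ P Q, W0 P Q
      = (f (Matrix.single P Q 1) : ℂ) - Complex.I * (f (Complex.I • Matrix.single P Q 1) : ℂ) :=
    fun P Q => rfl
  have hsmul : ∀ (z : ℂ) (M : Matrix ι ι ℂ),
      f (z • M) = z.re * f M + z.im * f (Complex.I • M) := by
    intro z M
    have hdec : z • M = (z.re : ℝ) • M + (z.im : ℝ) • (Complex.I • M) := by
      calc z • M = ((z.re : ℂ) + (z.im : ℂ) * Complex.I) • M := by rw [Complex.re_add_im]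
        _ = (z.re : ℂ) • M + ((z.im : ℂ) * Complex.I) • M := by rw [add_smul]
        _ = (z.re : ℝ) • M + (z.im : ℝ) • (Complex.I • M) := by
            rw [mul_smul]
            rw [show ((z.re : ℂ)) = algebraMap ℝ ℂ z.re from rfl,
              show ((z.im : ℂ)) = algebraMap ℝ ℂ z.im from rfl,
              algebraMap_smul, algebraMap_smul]
    rw [hdec, map_add, _root_.map_smul, _root_.map_smul, smul_eq_mul, smul_eq_mul]
  have hre : ∀ Y : Matrix ι ι ℂ, (mpair W0 Y).re = f Y := by
    intro Y
    have hfY : f Y = ∑ P, ∑ Q, ((Y P Q).re * f (Matrix.single P Q 1)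
        + (Y P Q).im * f (Complex.I • Matrix.single P Q 1)) := by
      conv_lhs => rw [Matrix.matrix_eq_sum_single Y]
      rw [map_sum]
      refine Finset.sum_congr rfl fun P _ => ?_
      rw [map_sum]
      refine Finset.sum_congr rfl fun Q _ => ?_
      rw [show Matrix.single P Q (Y P Q) = (Y P Q) • Matrix.single P Q (1:ℂ) from by
        rw [Matrix.smul_single, smul_eq_mul, mul_one]]
      exact hsmul _ _
    rw [mpair_eq_sum, Complex.re_sum, hfY]
    refine Finset.sum_congr rfl fun P _ => ?_
    rw [Complex.re_sum]
    refine Finset.sum_congr rfl fun Q _ => ?_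
    rw [hW0app]
    simp [Complex.mul_re, Complex.sub_re, Complex.sub_im, Complex.mul_im,
      Complex.ofReal_re, Complex.ofReal_im, Complex.I_re, Complex.I_im]
    ring
  set W : Matrix ι ι ℂ := (2⁻¹ : ℝ) • (W0 + W0ᴴ) with hW
  have hWapp : ∀ P Q, W P Q = (2⁻¹ : ℂ) * (W0 P Q + star (W0 Q P)) := by
    intro P Q
    show (2⁻¹ : ℝ) • ((W0 + W0ᴴ) P Q) = _
    rw [Matrix.add_apply, Matrix.conjTranspose_apply, Complex.real_smul]
    norm_num
  have hWherm : W.IsHermitian := by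
    ext P Q
    show star (W Q P) = W P Q
    rw [hWapp, hWapp, star_mul', star_add, star_star]
    rw [show star (2⁻¹ : ℂ) = (2⁻¹ : ℂ) from by norm_num]
    ring
  have hWpair : ∀ Y : Matrix ι ι ℂ, Y.IsHermitian → mpair W Y = ((f Y : ℝ) : ℂ) := by
    intro Y hY
    have hconj : mpair W0ᴴ Y = star (mpair W0 Y) := by
      rw [mpair_eq_sum, mpair_eq_sum, star_sum]
      rw [show (∑ P, star (∑ Q, W0 P Q * Y P Q)) = ∑ P, ∑ Q, star (W0 P Q) * star (Y P Q) from
        Finset.sum_congr rfl fun P _ => by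
          rw [star_sum]; exact Finset.sum_congr rfl fun Q _ => star_mul' _ _]
      rw [show (∑ P, ∑ Q, star (W0 P Q) * star (Y P Q))
          = ∑ P, ∑ Q, star (W0 P Q) * Y Q P from
        Finset.sum_congr rfl fun P _ => Finset.sum_congr rfl fun Q _ => by
          rw [show star (Y P Q) = Y Q P from congrFun (congrFun hY.eq Q) P]]
      rw [Finset.sum_comm]
      refine Finset.sum_congr rfl fun P _ => Finset.sum_congr rfl fun Q _ => ?_
      rw [Matrix.conjTranspose_apply]
    have h1 : mpair W Y = (2⁻¹ : ℝ) • (mpair W0 Y + mpair W0ᴴ Y) := by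
      rw [hW, mpair_real_smul, mpair_add_left]
    rw [h1, hconj]
    rw [show (mpair W0 Y + star (mpair W0 Y)) = ((2 * (mpair W0 Y).re : ℝ) : ℂ) from
      Complex.add_conj _]
    rw [hre, Complex.real_smul]
    push_cast
    ring
  refine ⟨W, hWherm, fun Y hY => ?_, ?_⟩
  · rw [hWpair Y (hherm Y hY)]
    exact Complex.zero_le_real.mpr (hfK0 Y hY)
  · rw [hWpair C hC, Complex.zero_le_real]
    push_neg
    linarith

end Separation

section Horodecki

open Matrix

set_option linter.unusedSectionVars false

lemma horodecki {m n : ℕ} {χ : MMap m n} (hh : IsHermP χ)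
    (hp : ∀ π ∈ P1set m n, 0 ≤ mapPair π χ) : choi χ ∈ SepCone m n := by
  by_contra hnot
  obtain ⟨W, hWherm, hWpos, hWneg⟩ := seph sepCone_convex sepCone_closed
    (fun X hX r hr => sepCone_real_smul hX hr) sepCone_zero
    (fun X hX => sepCone_isHermitian hX)
    ((isHermP_iff_choi_isHermitian χ).mp hh) hnot
  have hHerm : IsHermP (ofChoi W) := by
    rw [isHermP_iff_choi_isHermitian, choi_ofChoi]
    exact hWherm
  have hπ : IsPosMap (ofChoi W) := by
    intro x hx
    refine Matrix.PosSemidef.of_dotProduct_mulVec_nonneg ?_ ?_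
    · exact (hHerm x).symm.trans (congrArg _ hx.1)
    · intro v
      have hquad : star v ⬝ᵥ (ofChoi W x) *ᵥ v = mpair W (x ⊗ₖ outer v) := by
        rw [dot_eq_sum]
        calc ∑ p, ∑ q, star (v p) * (ofChoi W x) p q * v q
            = ∑ p, ∑ q, ∑ i, ∑ j, W (i, p) (j, q) * (x i j * (star (v p) * v q)) := by
              refine Finset.sum_congr rfl fun p _ => Finset.sum_congr rfl fun q _ => ?_
              rw [ofChoi_apply, Finset.mul_sum, Finset.sum_mul]
              refine Finset.sum_congr rfl fun i _ => ?_
              rw [Finset.mul_sum, Finset.sum_mul]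
              refine Finset.sum_congr rfl fun j _ => ?_
              ring
          _ = ∑ i, ∑ p, ∑ j, ∑ q, W (i, p) (j, q) * (x i j * (star (v p) * v q)) :=
              sum_comm4' _
          _ = mpair W (x ⊗ₖ outer v) := by
              rw [mpair_eq_sum, Fintype.sum_prod_type]
              refine Finset.sum_congr rfl fun i _ => Finset.sum_congr rfl fun p _ => ?_
              rw [Fintype.sum_prod_type]
              rfl
      rw [hquad]
      exact hWpos _ (subset_closure (mem_sepGen_kron hx (outer_posSemidef v)))
  refine hWneg ?_
  have h2 := hp (ofChoi W) hπ
  rwa [mapPair, choi_ofChoi] at h2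

end Horodecki

section DecDual

open Matrix

set_option linter.unusedSectionVars false

lemma psd_diag_re {ι : Type*} [Fintype ι] [DecidableEq ι] {A : Matrix ι ι ℂ}
    (hA : A.PosSemidef) : ∀ R, 0 ≤ (A R R).re := by
  obtain ⟨B, rfl⟩ := psd_eq_conjT_mul_self hA
  intro R
  have hdiag : ((Bᴴ * B) R R).re = ∑ r, Complex.normSq (B r R) := by
    rw [Matrix.mul_apply, Complex.re_sum]
    refine Finset.sum_congr rfl fun r _ => ?_
    rw [Matrix.conjTranspose_apply,
      show star (B r R) * B r R = ((Complex.normSq (B r R) : ℝ) : ℂ) from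
        Complex.normSq_eq_conj_mul_self.symm]
    exact Complex.ofReal_re _
  rw [hdiag]
  exact Finset.sum_nonneg fun r _ => Complex.normSq_nonneg _

lemma psd_trace_re_nonneg {ι : Type*} [Fintype ι] [DecidableEq ι] {A : Matrix ι ι ℂ}
    (hA : A.PosSemidef) : 0 ≤ (Matrix.trace A).re := by
  rw [Matrix.trace, Complex.re_sum]
  exact Finset.sum_nonneg fun R _ => psd_diag_re hA R

lemma psd_entry_bound {ι : Type*} [Fintype ι] [DecidableEq ι] {A : Matrix ι ι ℂ}
    (hA : A.PosSemidef) (P Q : ι) : ‖A P Q‖ ≤ (Matrix.trace A).re := by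
  obtain ⟨B, rfl⟩ := psd_eq_conjT_mul_self hA
  have hdiag : ∀ R, ((Bᴴ * B) R R).re = ∑ r, Complex.normSq (B r R) := by
    intro R
    rw [Matrix.mul_apply, Complex.re_sum]
    refine Finset.sum_congr rfl fun r _ => ?_
    rw [Matrix.conjTranspose_apply,
      show star (B r R) * B r R = ((Complex.normSq (B r R) : ℝ) : ℂ) from
        Complex.normSq_eq_conj_mul_self.symm]
    exact Complex.ofReal_re _
  set T : ℝ := (Matrix.trace (Bᴴ * B)).re with hT
  have htr : T = ∑ R, ∑ r, Complex.normSq (B r R) := by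
    rw [hT, Matrix.trace, Complex.re_sum]
    exact Finset.sum_congr rfl fun R _ => hdiag R
  have hbound : ∀ R : ι, ∑ r, Complex.normSq (B r R) ≤ T := by
    intro R
    rw [htr]
    exact Finset.single_le_sum (f := fun R => ∑ r, Complex.normSq (B r R))
      (fun S _ => Finset.sum_nonneg fun r _ => Complex.normSq_nonneg _) (Finset.mem_univ R)
  have hT0 : 0 ≤ T := by
    rw [htr]
    exact Finset.sum_nonneg fun R _ => Finset.sum_nonneg fun r _ => Complex.normSq_nonneg _
  have habs : ‖(Bᴴ * B) P Q‖
      ≤ ∑ r, ‖B r P‖ * ‖B r Q‖ := by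
    rw [Matrix.mul_apply]
    refine le_trans (norm_sum_le _ _) (le_of_eq (Finset.sum_congr rfl fun r _ => ?_))
    rw [Matrix.conjTranspose_apply, norm_mul,
      show (star (B r P)) = (starRingEnd ℂ) (B r P) from rfl, Complex.norm_conj]
  have hcs := Finset.sum_mul_sq_le_sq_mul_sq Finset.univ
    (fun r => ‖B r P‖) (fun r => ‖B r Q‖)
  have hsqP : (∑ r, ‖B r P‖ ^ 2) = ∑ r, Complex.normSq (B r P) :=
    Finset.sum_congr rfl fun r _ => Complex.sq_norm _
  have hsqQ : (∑ r, ‖B r Q‖ ^ 2) = ∑ r, Complex.normSq (B r Q) :=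
    Finset.sum_congr rfl fun r _ => Complex.sq_norm _
  have habs0 : 0 ≤ ∑ r, ‖B r P‖ * ‖B r Q‖ :=
    Finset.sum_nonneg fun r _ => mul_nonneg (norm_nonneg _) (norm_nonneg _)
  have hq : (∑ r, ‖B r P‖ * ‖B r Q‖) ^ 2 ≤ T * T := by
    refine le_trans hcs ?_
    rw [hsqP, hsqQ]
    exact mul_le_mul (hbound P) (hbound Q)
      (Finset.sum_nonneg fun r _ => Complex.normSq_nonneg _) hT0
  have hfin : ∑ r, ‖B r P‖ * ‖B r Q‖ ≤ T := by
    nlinarith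
  exact le_trans habs hfin

/-- The cone of Choi matrices of decomposable maps. -/
def decK (a : ℕ) : Set (Matrix (Fin a × Fin a) (Fin a × Fin a) ℂ) :=
  {C | ∃ A B, A.PosSemidef ∧ (ptrans B).PosSemidef ∧ C = A + B}

lemma continuous_ptrans {a : ℕ} :
    Continuous fun X : Matrix (Fin a × Fin a) (Fin a × Fin a) ℂ => ptrans X := by
  refine continuous_pi fun P => continuous_pi fun Q => ?_
  exact continuous_entry _ _

lemma isClosed_decK (a : ℕ) : IsClosed (decK a) := by
  refine IsSeqClosed.isClosed ?_
  intro f C hf hlim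
  choose A B hA hB hAB using hf
  set τ : Matrix (Fin a × Fin a) (Fin a × Fin a) ℂ → ℝ := fun X => (Matrix.trace X).re with hτ
  have hτcont : Continuous τ := by
    refine Complex.continuous_re.comp ?_
    show Continuous fun X : Matrix (Fin a × Fin a) (Fin a × Fin a) ℂ => Matrix.trace X
    have h : (fun X : Matrix (Fin a × Fin a) (Fin a × Fin a) ℂ => Matrix.trace X)
        = fun X => ∑ P, X P P := rfl
    rw [h]
    exact continuous_finset_sum _ fun P _ => continuous_entry P P
  have hτB : ∀ k, 0 ≤ τ (B k) := by
    intro k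
    have h := psd_trace_re_nonneg (hB k)
    rwa [ptrans_trace] at h
  have hτf : ∀ k, τ (A k) ≤ τ (f k) := by
    intro k
    have h : τ (f k) = τ (A k) + τ (B k) := by
      rw [hAB k]
      show (Matrix.trace (A k + B k)).re = _
      rw [Matrix.trace_add, Complex.add_re]
    rw [h]
    linarith [hτB k]
  have hconv : Filter.Tendsto (fun k => τ (f k)) Filter.atTop (nhds (τ C)) :=
    (hτcont.tendsto C).comp hlim
  obtain ⟨T, hT⟩ := hconv.bddAbove_range
  have hTbound : ∀ k, τ (A k) ≤ T := fun k => le_trans (hτf k) (hT (Set.mem_range_self k))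
  have hCompClosed : IsClosed {X : Matrix (Fin a × Fin a) (Fin a × Fin a) ℂ |
      X.PosSemidef ∧ τ X ≤ T} := by
    have h : {X : Matrix (Fin a × Fin a) (Fin a × Fin a) ℂ | X.PosSemidef ∧ τ X ≤ T}
        = {X | X.PosSemidef} ∩ {X | τ X ≤ T} := rfl
    rw [h]
    exact isClosed_psd.inter (isClosed_le hτcont continuous_const)
  have hsubbox : {X : Matrix (Fin a × Fin a) (Fin a × Fin a) ℂ | X.PosSemidef ∧ τ X ≤ T}
      ⊆ Set.univ.pi fun _ : Fin a × Fin a =>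
        Set.univ.pi fun _ : Fin a × Fin a => Metric.closedBall (0 : ℂ) T := by
    intro X hX
    refine Set.mem_univ_pi.mpr fun P => Set.mem_univ_pi.mpr fun Q => ?_
    rw [Metric.mem_closedBall, dist_zero_right]
    exact le_trans (psd_entry_bound hX.1 P Q) hX.2
  have hboxcompact : IsCompact (Set.univ.pi fun _ : Fin a × Fin a =>
      Set.univ.pi fun _ : Fin a × Fin a => Metric.closedBall (0 : ℂ) T) :=
    isCompact_univ_pi fun _ => isCompact_univ_pi fun _ => isCompact_closedBall 0 T
  have hCompact : IsCompact {X : Matrix (Fin a × Fin a) (Fin a × Fin a) ℂ |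
      X.PosSemidef ∧ τ X ≤ T} := hboxcompact.of_isClosed_subset hCompClosed hsubbox
  obtain ⟨Al, hAl, σ, hσmono, hAconv⟩ :=
    hCompact.tendsto_subseq (x := A) (fun k => ⟨hA k, hTbound k⟩)
  have hfσ : Filter.Tendsto (fun k => f (σ k)) Filter.atTop (nhds C) :=
    hlim.comp hσmono.tendsto_atTop
  have hBconv : Filter.Tendsto (fun k => B (σ k)) Filter.atTop (nhds (C - Al)) := by
    have h : (fun k => B (σ k)) = fun k => f (σ k) - (A ∘ σ) k := by
      funext k
      show B (σ k) = f (σ k) - A (σ k)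
      rw [hAB (σ k)]
      abel
    rw [h]
    exact hfσ.sub hAconv
  have hBl : (ptrans (C - Al)).PosSemidef := by
    have hptconv : Filter.Tendsto (fun k => ptrans (B (σ k))) Filter.atTop
        (nhds (ptrans (C - Al))) := (continuous_ptrans.tendsto _).comp hBconv
    exact isClosed_psd.mem_of_tendsto hptconv
      (Filter.Eventually.of_forall fun k => hB (σ k))
  exact ⟨Al, C - Al, hAl.1, hBl, by abel⟩

lemma decK_convex (a : ℕ) : Convex ℝ (decK a) := by
  rintro x ⟨A₁, B₁, hA₁, hB₁, rfl⟩ y ⟨A₂, B₂, hA₂, hB₂, rfl⟩ s t hs ht _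
  refine ⟨s • A₁ + t • A₂, s • B₁ + t • B₂,
    (psd_real_smul hA₁ hs).add (psd_real_smul hA₂ ht), ?_, ?_⟩
  · rw [ptrans_add, ptrans_real_smul, ptrans_real_smul]
    exact (psd_real_smul hB₁ hs).add (psd_real_smul hB₂ ht)
  · rw [smul_add, smul_add]
    abel

lemma decK_cone (a : ℕ) : ∀ X ∈ decK a, ∀ r : ℝ, 0 ≤ r → r • X ∈ decK a := by
  rintro X ⟨A, B, hA, hB, rfl⟩ r hr
  refine ⟨r • A, r • B, psd_real_smul hA hr, ?_, by rw [smul_add]⟩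
  rw [ptrans_real_smul]
  exact psd_real_smul hB hr

lemma decK_zero (a : ℕ) : (0 : Matrix (Fin a × Fin a) (Fin a × Fin a) ℂ) ∈ decK a :=
  ⟨0, 0, Matrix.PosSemidef.zero, by rw [ptrans_zero]; exact Matrix.PosSemidef.zero,
    (add_zero 0).symm⟩

lemma decK_herm (a : ℕ) : ∀ X ∈ decK a, X.IsHermitian := by
  rintro X ⟨A, B, hA, hB, rfl⟩
  have hBherm : B.IsHermitian := by
    rw [← ptrans_ptrans B]
    exact ptrans_isHermitian hB.1
  exact hA.1.add hBherm

lemma dec_of_dual {a : ℕ} {χ : MMap a a} (hh : IsHermP χ)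
    (hp : ∀ ψ ∈ PPTset a, 0 ≤ mapPair ψ χ) : χ ∈ DECset a := by
  by_cases hmem : choi χ ∈ decK a
  · obtain ⟨A, B, hA, hB, hAB⟩ := hmem
    rw [mem_DEC_iff]
    refine ⟨ofChoi A, ?_, ofChoi B, ?_, ?_⟩
    · rw [mem_CP_iff, IsCP, choi_ofChoi]
      exact hA
    · rw [mem_CCP_iff, choi_ofChoi]
      exact hB
    · refine choi_inj ?_
      rw [hAB, choi_add, choi_ofChoi, choi_ofChoi]
  · exfalso
    obtain ⟨W, hWherm, hWpos, hWneg⟩ := seph (decK_convex a) (isClosed_decK a)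
      (decK_cone a) (decK_zero a) (decK_herm a)
      ((isHermP_iff_choi_isHermitian χ).mp hh) hmem
    have hWpsd : W.PosSemidef := by
      refine psd_of_mpair hWherm fun x hx => ?_
      have hmemK : x ∈ decK a :=
        ⟨x, 0, hx, by rw [ptrans_zero]; exact Matrix.PosSemidef.zero, (add_zero x).symm⟩
      have h2 := hWpos x hmemK
      rwa [mpair_comm] at h2
    have hWpt : (ptrans W).PosSemidef := by
      refine psd_of_mpair (ptrans_isHermitian hWherm) fun x hx => ?_
      have hmemK : ptrans x ∈ decK a :=
        ⟨0, ptrans x, Matrix.PosSemidef.zero, by rw [ptrans_ptrans]; exact hx,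
          (zero_add _).symm⟩
      have h2 := hWpos _ hmemK
      rw [mpair_ptrans] at h2
      rwa [mpair_comm] at h2
    have hppt : ofChoi W ∈ PPTset a := by
      constructor
      · rw [mem_CP_iff, IsCP, choi_ofChoi]
        exact hWpsd
      · rw [mem_CCP_iff, choi_ofChoi]
        exact hWpt
    have h3 := hp (ofChoi W) hppt
    rw [mapPair, choi_ofChoi] at h3
    exact hWneg h3

end DecDual


section Glue

open Matrix

set_option linter.unusedSectionVars false

lemma adj_tmap {a : ℕ} : adjMap (tmap a) = tmap a := by
  refine LinearMap.ext fun y => ?_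
  ext i j
  rw [adjMap_apply, mpair_eq_sum]
  show (∑ p, ∑ q, (Matrix.single i j (1:ℂ))ᵀ p q * y p q) = yᵀ i j
  rw [transpose_stdBasisMatrix]
  rw [show (∑ p, ∑ q, Matrix.single j i (1:ℂ) p q * y p q)
      = ∑ p, ∑ q, y p q * Matrix.single j i (1:ℂ) p q from
    Finset.sum_congr rfl fun p _ => Finset.sum_congr rfl fun q _ => mul_comm _ _]
  rw [stdBasis_collapse y j i]
  rfl

lemma ccp_adj {a : ℕ} {χ : MMap a a} (h : χ ∈ CCPset a) : adjMap χ ∈ CCPset a := by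
  obtain ⟨φ, hφ, rfl⟩ := h
  rw [adj_comp, adj_tmap]
  refine ⟨tmap a ∘ₗ adjMap φ ∘ₗ tmap a, isCP_tconj (adj_isCP hφ), ?_⟩
  simp only [LinearMap.comp_assoc, tmap_tmap, LinearMap.comp_id]

lemma dec_adj {a : ℕ} {χ : MMap a a} (h : χ ∈ DECset a) : adjMap χ ∈ DECset a := by
  obtain ⟨φ, hφ, ψ, hψ, rfl⟩ := (mem_DEC_iff χ).mp h
  rw [mem_DEC_iff, adj_add]
  exact ⟨adjMap φ, adj_isCP hφ, adjMap ψ, ccp_adj hψ, rfl⟩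

end Glue

end StmtAux



/-- seven equivalent formulations of the PPT-square conjecture. -/
theorem stmt19 {a : ℕ} :
    [compSet (PPTset a) (PPTset a) ⊆ SP1set a a,
     compSet (PPTset a) (P1set a a) ⊆ DECset a,
     compSet (P1set a a) (PPTset a) ⊆ DECset a,
     comp3 (PPTset a) (CPset a a) (PPTset a) ⊆ SP1set a a,
     comp3 (PPTset a) (DECset a) (PPTset a) ⊆ SP1set a a,
     comp3 (PPTset a) (P1set a a) (PPTset a) ⊆ CPset a a,
     comp3 (PPTset a) (P1set a a) (PPTset a) ⊆ PPTset a].TFAE := by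
  open StmtAux in
  tfae_have 1 → 4 := by
    intro h1
    rintro χ ⟨φ₂, h2, ψ, hψ, φ₀, h0, rfl⟩
    exact h1 ⟨φ₂ ∘ₗ ψ, ppt_comp_cp_mem h2 hψ, φ₀, h0, (LinearMap.comp_assoc _ _ _).symm⟩
  tfae_have 4 → 5 := by
    intro h4
    rintro χ ⟨φ₂, h2, δ, hδ, φ₀, h0, rfl⟩
    obtain ⟨ψ, hψ, χ', hχ', hsum⟩ := (mem_DEC_iff δ).mp hδ
    obtain ⟨ρ, hρ, rfl⟩ := hχ'
    have hrw : φ₂ ∘ₗ δ ∘ₗ φ₀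
        = φ₂ ∘ₗ ψ ∘ₗ φ₀ + φ₂ ∘ₗ ρ ∘ₗ (tmap a ∘ₗ φ₀) := by
      rw [hsum]
      rw [LinearMap.add_comp, LinearMap.comp_add]
      simp only [LinearMap.comp_assoc]
    rw [hrw]
    refine sp1_add (h4 ⟨φ₂, h2, ψ, hψ, φ₀, h0, rfl⟩) ?_
    exact h4 ⟨φ₂, h2, ρ, hρ, tmap a ∘ₗ φ₀, tmap_comp_mem_PPT h0, rfl⟩
  tfae_have 5 → 1 := by
    intro h5
    rintro χ ⟨φ, hφ, ψ, hψ, rfl⟩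
    have hid : (LinearMap.id : MMap a a) ∈ DECset a :=
      (mem_DEC_iff _).mpr ⟨LinearMap.id, isCP_id, 0, ccp_zero, (add_zero _).symm⟩
    exact h5 ⟨φ, hφ, LinearMap.id, hid, ψ, hψ, by rw [LinearMap.id_comp]⟩
  tfae_have 1 → 2 := by
    intro h1
    rintro χ ⟨φ, hφ, π, hπ, rfl⟩
    refine dec_of_dual (isHermP_comp (ppt_hermP hφ) (isPosMap_hermP hπ)) fun ψ hψ => ?_
    have e1 : mapPair ψ (φ ∘ₗ π) = mapPair (adjMap φ ∘ₗ ψ) π := by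
      rw [mapPair_comm, mapPair_comp_left, mapPair_comm]
    rw [e1]
    exact sp1_pair_nonneg (h1 ⟨adjMap φ, adj_mem_PPT hφ, ψ, hψ, rfl⟩) hπ
  tfae_have 2 → 3 := by
    intro h2
    rintro χ ⟨π, hπ, φ, hφ, rfl⟩
    have h := dec_adj (h2 ⟨adjMap φ, adj_mem_PPT hφ, adjMap π, adj_posMap hπ, rfl⟩)
    rwa [adj_comp, adj_adj, adj_adj] at h
  tfae_have 3 → 2 := by
    intro h3
    rintro χ ⟨φ, hφ, π, hπ, rfl⟩
    have h := dec_adj (h3 ⟨adjMap π, adj_posMap hπ, adjMap φ, adj_mem_PPT hφ, rfl⟩)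
    rwa [adj_comp, adj_adj, adj_adj] at h
  tfae_have 2 → 6 := by
    intro h2
    rintro χ ⟨φ₂, h2m, π, hπ, φ₀, h0, rfl⟩
    obtain ⟨ψ, hψ, χ', hχ', hsum⟩ := (mem_DEC_iff _).mp (h2 ⟨φ₂, h2m, π, hπ, rfl⟩)
    obtain ⟨ρ, hρ, rfl⟩ := hχ'
    have hrw : φ₂ ∘ₗ π ∘ₗ φ₀ = ψ ∘ₗ φ₀ + ρ ∘ₗ (tmap a ∘ₗ φ₀) := by
      rw [← LinearMap.comp_assoc, hsum, LinearMap.add_comp, LinearMap.comp_assoc]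
    rw [mem_CP_iff, hrw]
    exact isCP_add (isCP_comp hψ h0.1) (isCP_comp hρ (tmap_comp_mem_PPT h0).1)
  tfae_have 6 → 7 := by
    intro h6
    rintro χ ⟨φ₂, h2, π, hπ, φ₀, h0, rfl⟩
    constructor
    · exact h6 ⟨φ₂, h2, π, hπ, φ₀, h0, rfl⟩
    · refine ⟨(φ₂ ∘ₗ π ∘ₗ φ₀) ∘ₗ tmap a, ?_, ?_⟩
      · have h := h6 ⟨φ₂, h2, π, hπ, φ₀ ∘ₗ tmap a, comp_tmap_mem_PPT h0, rfl⟩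
        rw [mem_CP_iff] at h
        have hrw : φ₂ ∘ₗ π ∘ₗ (φ₀ ∘ₗ tmap a) = (φ₂ ∘ₗ π ∘ₗ φ₀) ∘ₗ tmap a := by
          simp only [LinearMap.comp_assoc]
        rwa [hrw] at h
      · simp only [LinearMap.comp_assoc, tmap_tmap, LinearMap.comp_id]
  tfae_have 7 → 6 := by
    intro h7
    rintro χ hχ
    exact (h7 hχ).1
  tfae_have 6 → 1 := by
    intro h6
    rintro χ ⟨φ, hφ, ψ, hψ, rfl⟩
    have hherm : IsHermP (φ ∘ₗ ψ) := isHermP_comp (ppt_hermP hφ) (ppt_hermP hψ)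
    refine ⟨hherm, horodecki hherm fun π hπ => ?_⟩
    have e1 : mapPair π (φ ∘ₗ ψ)
        = mapPair (LinearMap.id : MMap a a) ((adjMap φ ∘ₗ π) ∘ₗ adjMap ψ) := by
      rw [mapPair_comm, mapPair_comp_left, ← LinearMap.id_comp ψ, mapPair_comp_right,
        LinearMap.id_comp]
    rw [e1, LinearMap.comp_assoc]
    exact mapPair_id_nonneg
      (h6 ⟨adjMap φ, adj_mem_PPT hφ, π, hπ, adjMap ψ, adj_mem_PPT hψ, rfl⟩)
  tfae_finish
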